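/- arXiv:2307.00839 — 4 statements merged into one kernel-verified Lean document; each statement's English description precedes it below -/
import Mathlib

section
/- Let I = ⋃_n I_n, where (I_n) is a (finite or countable) family of open intervals in [0, ∞) with |I_n| → +∞ if the family is infinite. Then there exists a family (J̃_n) of pairwise disjoint open intervals in [0, ∞) (with |J̃_n| → +∞ if there are infinitely many of them) such that the set Ĩ = ⋃_n J̃_n satisfies: (i) Ĩ ⊆ I; (ii) for every R > 0 the set Ĩ_R ∖ I is bounded, where Ĩ_R = ⋃_{s∈Ĩ}(s−R, s+R); (iii) for every R > 0, κ_⋆(Ĩ) = κ_⋆(Ĩ_R) = κ_⋆(I) = κ_⋆(I_R), where I_R = ⋃_{s∈I}(s−R, s+R). -/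
open MeasureTheory Filter

noncomputable section

/-- `κ_⋆(J) = inf {κ ∈ [0,1] : liminf_{r→+∞} (1/r)|J ∩ [κr, r]| = 0}`. -/
def kappaStar (J : Set ℝ) : ℝ :=
  sInf {κ : ℝ | κ ∈ Set.Icc (0 : ℝ) 1 ∧
    liminf (fun r : ℝ => (volume (J ∩ Set.Icc (κ * r) r)).toReal / r) atTop = 0}

/-- The one-dimensional thickening `J_R = ⋃_{s ∈ J} (s - R, s + R)`. -/
def thickenR (J : Set ℝ) (R : ℝ) : Set ℝ := ⋃ s ∈ J, Set.Ioo (s - R) (s + R)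

open Set Metric
open scoped ENNReal NNReal Function

/-!
The open set `I` is the disjoint union of its connected components `C_k`, again open intervals
whose lengths tend to infinity. Trimming a bounded component `(a, b)` by
`e = min ((b - a) / 4) √a` at both ends gives `J̃_k`; since `e ≥ R` for all but finitely many
components, `J̃_R ⊆ I` up to a bounded set.

`κ_⋆` only sees the window measures `|A ∩ [κr, r]|` up to a constant factor and an `o(r)`
error, and all three comparisons are of that kind. In a window, `J̃` keeps at least half of every
component lying inside it and loses `O(√r)` on the two components cut by the window ends.
Thickening by `R` adds at most `2R` per component, a small fraction of a long component, and
only finitely many components are short.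
-/

section Window

def windowDensity (A : Set ℝ) (κ r : ℝ) : ℝ := volume.real (A ∩ Icc (κ * r) r) / r

theorem kappaStar_eq (A : Set ℝ) :
    kappaStar A = sInf {κ | κ ∈ Icc (0 : ℝ) 1 ∧ liminf (windowDensity A κ) atTop = 0} :=
  rfl

variable {A B : Set ℝ} {κ : ℝ}

theorem windowDensity_nonneg (A : Set ℝ) (κ : ℝ) {r : ℝ} (hr : 0 ≤ r) :
    0 ≤ windowDensity A κ r :=
  div_nonneg measureReal_nonneg hr

theorem windowDensity_le_one (A : Set ℝ) (hκ : 0 ≤ κ) {r : ℝ} (hr : 0 < r) :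
    windowDensity A κ r ≤ 1 := by
  rw [windowDensity, div_le_one hr]
  calc volume.real (A ∩ Icc (κ * r) r) ≤ volume.real (Icc (κ * r) r) :=
        measureReal_mono inter_subset_right measure_Icc_lt_top.ne
    _ = max (r - κ * r) 0 := Real.volume_real_Icc
    _ ≤ r := max_le (by nlinarith) hr.le

theorem windowDensity_mono (hAB : A ⊆ B) (κ : ℝ) {r : ℝ} (hr : 0 ≤ r) :
    windowDensity A κ r ≤ windowDensity B κ r :=
  div_le_div_of_nonneg_right
    (measureReal_mono (inter_subset_inter_left _ hAB)
      (measure_inter_ne_top_of_right_ne_top measure_Icc_lt_top.ne)) hr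

theorem isBoundedUnder_ge_windowDensity (A : Set ℝ) (κ : ℝ) :
    IsBoundedUnder (· ≥ ·) atTop (windowDensity A κ) :=
  isBoundedUnder_of_eventually_ge <|
    (eventually_ge_atTop 0).mono fun _ hr => windowDensity_nonneg A κ hr

theorem isCoboundedUnder_ge_windowDensity (A : Set ℝ) (hκ : 0 ≤ κ) :
    IsCoboundedUnder (· ≥ ·) atTop (windowDensity A κ) :=
  isCoboundedUnder_ge_of_eventually_le atTop <|
    (eventually_gt_atTop 0).mono fun _ hr => windowDensity_le_one A hκ hr

theorem liminf_windowDensity_nonneg (A : Set ℝ) (hκ : 0 ≤ κ) :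
    0 ≤ liminf (windowDensity A κ) atTop :=
  le_liminf_of_le (isCoboundedUnder_ge_windowDensity A hκ) <|
    (eventually_ge_atTop 0).mono fun _ hr => windowDensity_nonneg A κ hr

theorem liminf_windowDensity_one (A : Set ℝ) : liminf (windowDensity A 1) atTop = 0 := by
  have h : windowDensity A 1 = 0 := by
    ext r
    simp [windowDensity, Measure.real, measure_mono_null inter_subset_right]
  rw [h]
  exact liminf_const 0

theorem kappaStar_le_kappaStar_of_forall
    (h : ∀ κ ∈ Icc (0 : ℝ) 1, liminf (windowDensity A κ) atTop = 0 →
      liminf (windowDensity B κ) atTop = 0) :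
    kappaStar B ≤ kappaStar A := by
  rw [kappaStar_eq, kappaStar_eq]
  exact csInf_le_csInf ⟨0, fun _ hκ => hκ.1.1⟩
    ⟨1, ⟨zero_le_one, le_rfl⟩, liminf_windowDensity_one A⟩
    fun κ hκ => ⟨hκ.1, h κ hκ.1 hκ.2⟩

theorem kappaStar_mono (hAB : A ⊆ B) : kappaStar A ≤ kappaStar B :=
  kappaStar_le_kappaStar_of_forall fun κ hκ hB =>
    le_antisymm
      (hB ▸ liminf_le_liminf
        ((eventually_ge_atTop 0).mono fun _ hr => windowDensity_mono hAB κ hr)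
        (isBoundedUnder_ge_windowDensity A κ) (isCoboundedUnder_ge_windowDensity B hκ.1))
      (liminf_windowDensity_nonneg A hκ.1)

def WindowDominated (A B : Set ℝ) (C : ℝ≥0) : Prop :=
  ∀ ε > 0, ∃ N ≠ ∞, ∀ s r : ℝ, 0 ≤ s → s ≤ r →
    volume (B ∩ Icc s r) ≤ C * volume (A ∩ Icc s r) + ENNReal.ofReal (ε * r) + N

theorem WindowDominated.eventually_windowDensity_le {C : ℝ≥0} (h : WindowDominated A B C)
    (hκ : κ ∈ Icc (0 : ℝ) 1) {ε : ℝ} (hε : 0 < ε) :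
    ∀ᶠ r in atTop, windowDensity B κ r ≤ C * windowDensity A κ r + 2 * ε := by
  obtain ⟨N, hN, hbound⟩ := h ε hε
  filter_upwards [eventually_gt_atTop 0, eventually_ge_atTop (N.toReal / ε)] with r hr hrN
  have hA : volume (A ∩ Icc (κ * r) r) ≠ ∞ :=
    measure_inter_ne_top_of_right_ne_top measure_Icc_lt_top.ne
  have hwin := ENNReal.toReal_mono (by finiteness)
    (hbound _ _ (mul_nonneg hκ.1 hr.le) (mul_le_of_le_one_left hr.le hκ.2))
  rw [ENNReal.toReal_add (by finiteness) hN, ENNReal.toReal_add (by finiteness) (by finiteness),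
    ENNReal.toReal_mul, ENNReal.coe_toReal, ENNReal.toReal_ofReal (by positivity)] at hwin
  rw [div_le_iff₀ hε] at hrN
  rw [windowDensity, windowDensity, div_le_iff₀ hr, add_mul, mul_assoc,
    div_mul_cancel₀ _ hr.ne']
  change volume.real _ ≤ C * volume.real _ + ε * r + N.toReal at hwin
  linarith

theorem WindowDominated.liminf_windowDensity_eq_zero {C : ℝ≥0} (h : WindowDominated A B C)
    (hκ : κ ∈ Icc (0 : ℝ) 1) (hA : liminf (windowDensity A κ) atTop = 0) :
    liminf (windowDensity B κ) atTop = 0 := by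
  have hsmall : ∀ δ > 0, liminf (windowDensity B κ) atTop ≤ (C + 2) * δ := fun δ hδ => by
    have hfreq : ∃ᶠ r in atTop, windowDensity A κ r < δ :=
      frequently_lt_of_liminf_lt (isCoboundedUnder_ge_windowDensity A hκ.1) (hA ▸ hδ)
    refine liminf_le_of_frequently_le ?_ (isBoundedUnder_ge_windowDensity B κ)
    refine (hfreq.and_eventually (h.eventually_windowDensity_le hκ hδ)).mono
      fun r ⟨hA, hB⟩ => ?_
    nlinarith [C.coe_nonneg]
  refine le_antisymm (le_of_forall_pos_le_add fun ε hε => ?_)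
    (liminf_windowDensity_nonneg B hκ.1)
  simpa [mul_div_cancel₀ ε (by positivity : (C : ℝ) + 2 ≠ 0)] using
    hsmall (ε / (C + 2)) (by positivity)

theorem kappaStar_eq_of_windowDominated {C : ℝ≥0} (hAB : A ⊆ B) (h : WindowDominated A B C) :
    kappaStar A = kappaStar B :=
  (kappaStar_mono hAB).antisymm <| kappaStar_le_kappaStar_of_forall fun _ hκ =>
    h.liminf_windowDensity_eq_zero hκ

end Window

section Intervals

theorem Set.OrdConnected.subset_Icc_of_notMem {α : Type*} [LinearOrder α] {D : Set α}
    (hD : D.OrdConnected) {s r : α} (hmeet : (D ∩ Icc s r).Nonempty) (hs : s ∉ D)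
    (hr : r ∉ D) :
    D ⊆ Icc s r := by
  obtain ⟨w, hwD, hsw, hwr⟩ := hmeet
  refine fun y hy => ⟨?_, ?_⟩
  · by_contra! hys
    exact hs (hD.out hy hwD ⟨hys.le, hsw⟩)
  · by_contra! hry
    exact hr (hD.out hwD hy ⟨hwr, hry.le⟩)

theorem thickening_inter_Icc_subset (R : ℝ) (D : Set ℝ) (s r : ℝ) :
    thickening R D ∩ Icc s r ⊆ thickening R (D ∩ Icc (s - R) (r + R)) := by
  rintro x ⟨hx, hxs, hxr⟩
  obtain ⟨z, hz, hxz⟩ := mem_thickening_iff.1 hx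
  rw [Real.dist_eq, abs_sub_lt_iff] at hxz
  exact mem_thickening_iff.2 ⟨z, ⟨hz, by linarith, by linarith⟩, by
    rw [Real.dist_eq, abs_sub_lt_iff]; exact hxz⟩

theorem thickenR_eq_thickening (J : Set ℝ) (R : ℝ) : thickenR J R = thickening R J := by
  ext x
  simp only [thickenR, mem_iUnion₂, mem_Ioo, mem_thickening_iff, Real.dist_eq, abs_sub_lt_iff,
    exists_prop]
  constructor <;> rintro ⟨s, hs, h₁, h₂⟩ <;> exact ⟨s, hs, by linarith, by linarith⟩

theorem thickening_iUnion_subset {X ι : Type*} [PseudoMetricSpace X] (R : ℝ) (D : ι → Set X) :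
    thickening R (⋃ k, D k) ⊆ (⋃ k, D k) ∪ ⋃ k, (thickening R (D k) \ D k) := by
  intro x hx
  by_cases hxD : x ∈ ⋃ k, D k
  · exact Or.inl hxD
  obtain ⟨k, hk⟩ := mem_iUnion.1 ((thickening_iUnion R D).subset hx)
  exact Or.inr (mem_iUnion.2 ⟨k, hk, fun h => hxD (mem_iUnion.2 ⟨k, h⟩)⟩)

def IsIooOrIoi (D : Set ℝ) : Prop := ∃ a b : ℝ, D = Ioo a b ∨ D = Ioi a

theorem isIooOrIoi_empty : IsIooOrIoi ∅ := ⟨0, 0, Or.inl (Ioo_self 0).symm⟩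

namespace IsIooOrIoi

variable {D : Set ℝ}

theorem isOpen (hD : IsIooOrIoi D) : IsOpen D := by
  obtain ⟨a, b, rfl | rfl⟩ := hD
  exacts [isOpen_Ioo, isOpen_Ioi]

theorem ordConnected (hD : IsIooOrIoi D) : D.OrdConnected := by
  obtain ⟨a, b, rfl | rfl⟩ := hD
  exacts [ordConnected_Ioo, ordConnected_Ioi]

theorem exists_nonneg (hD : IsIooOrIoi D) (h0 : D ⊆ Ici 0) :
    ∃ a b : ℝ, 0 ≤ a ∧ (D = Ioo a b ∨ D = Ioi a) := by
  obtain ⟨a, b, rfl | rfl⟩ := hD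
  · rcases lt_or_ge a b with hab | hba
    · refine ⟨a, b, isClosed_Ici.closure_subset_iff.2 h0 ?_, Or.inl rfl⟩
      rw [closure_Ioo hab.ne]
      exact left_mem_Icc.2 hab.le
    · exact ⟨0, 0, le_rfl, Or.inl (by rw [Ioo_eq_empty hba.not_gt, Ioo_self])⟩
  · refine ⟨a, b, isClosed_Ici.closure_subset_iff.2 h0 ?_, Or.inr rfl⟩
    rw [closure_Ioi]
    exact self_mem_Ici

theorem exists_thickening_diff_subset (hD : IsIooOrIoi D) (R : ℝ) :
    ∃ a b : ℝ, thickening R D \ D ⊆ Icc (a - R) a ∪ Icc b (b + R) := by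
  obtain ⟨a, b, rfl | rfl⟩ := hD
  · refine ⟨a, b, fun x ⟨hx, hxD⟩ => ?_⟩
    obtain ⟨z, ⟨haz, hzb⟩, hxz⟩ := mem_thickening_iff.1 hx
    rw [Real.dist_eq, abs_sub_lt_iff] at hxz
    rw [mem_Ioo, not_and_or, not_lt, not_lt] at hxD
    rcases hxD with hxa | hbx
    · exact Or.inl ⟨by linarith, hxa⟩
    · exact Or.inr ⟨hbx, by linarith⟩
  · refine ⟨a, a, fun x ⟨hx, hxD⟩ => Or.inl ?_⟩
    obtain ⟨z, haz, hxz⟩ := mem_thickening_iff.1 hx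
    rw [Real.dist_eq, abs_sub_lt_iff] at hxz
    exact ⟨by rw [mem_Ioi] at haz; linarith, not_lt.1 hxD⟩

theorem volume_thickening_diff_le (hD : IsIooOrIoi D) {R : ℝ} (hR : 0 ≤ R) :
    volume (thickening R D \ D) ≤ ENNReal.ofReal (2 * R) := by
  obtain ⟨a, b, hsub⟩ := hD.exists_thickening_diff_subset R
  calc volume (thickening R D \ D) ≤ volume (Icc (a - R) a) + volume (Icc b (b + R)) :=
        (measure_mono hsub).trans (measure_union_le _ _)
    _ = ENNReal.ofReal (2 * R) := by
        rw [Real.volume_Icc, Real.volume_Icc, ← ENNReal.ofReal_add (by linarith) (by linarith)]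
        ring_nf

theorem isBounded_thickening_diff (hD : IsIooOrIoi D) (R : ℝ) :
    Bornology.IsBounded (thickening R D \ D) := by
  obtain ⟨a, b, hsub⟩ := hD.exists_thickening_diff_subset R
  exact ((isBounded_Icc _ _).union (isBounded_Icc _ _)).subset hsub

theorem volume_thickening_diff_inter_Icc_le (hD : IsIooOrIoi D) {R ε s r : ℝ} (hR : 0 ≤ R)
    (hlong : D.Nonempty → ENNReal.ofReal (2 * R) ≤ ENNReal.ofReal ε * volume D)
    (hs : s - R ∉ D) (hr : r + R ∉ D) :
    volume ((thickening R D \ D) ∩ Icc s r) ≤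
      ENNReal.ofReal ε * volume (D ∩ Icc (s - R) (r + R)) := by
  rcases (D ∩ Icc (s - R) (r + R)).eq_empty_or_nonempty with hmiss | hmeet
  · have hempty : (thickening R D \ D) ∩ Icc s r = ∅ := subset_empty_iff.1 <|
      (inter_subset_inter_left _ sdiff_subset).trans <|
        (thickening_inter_Icc_subset R D s r).trans (by rw [hmiss, thickening_empty])
    simp [hempty]
  · rw [inter_eq_left.2 (hD.ordConnected.subset_Icc_of_notMem hmeet hs hr)]
    calc volume ((thickening R D \ D) ∩ Icc s r) ≤ volume (thickening R D \ D) :=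
          measure_mono inter_subset_left
      _ ≤ ENNReal.ofReal (2 * R) := hD.volume_thickening_diff_le hR
      _ ≤ ENNReal.ofReal ε * volume D := hlong (hmeet.mono inter_subset_left)

end IsIooOrIoi

end Intervals

section Families

theorem encard_setOf_mem_le_one {ι α : Type*} {D : ι → Set α} (hD : Pairwise (Disjoint on D))
    (x : α) : {k | x ∈ D k}.encard ≤ 1 :=
  encard_le_one_iff.2 fun _ _ hi hj => by_contra fun hij => disjoint_left.1 (hD hij) hi hj

theorem encard_union_setOf_mem_le_two {ι α : Type*} {D : ι → Set α}
    (hD : Pairwise (Disjoint on D)) (x y : α) :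
    ({k | x ∈ D k} ∪ {k | y ∈ D k}).encard ≤ 2 :=
  calc ({k | x ∈ D k} ∪ {k | y ∈ D k}).encard ≤ 1 + 1 :=
        (encard_union_le _ _).trans (by gcongr <;> exact encard_setOf_mem_le_one hD _)
    _ = 2 := one_add_one_eq_two

theorem measure_iUnion_le_mul_add_encard_mul {α ι : Type*} [MeasurableSpace α] [Countable ι]
    {μ : Measure α} {D E : ι → Set α} (hE : Pairwise (Disjoint on E))
    (hEm : ∀ k, MeasurableSet (E k)) {C c : ℝ≥0∞} {S : Set ι}
    (h : ∀ k, μ (D k) ≤ C * μ (E k) + S.indicator (fun _ => c) k) :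
    μ (⋃ k, D k) ≤ C * μ (⋃ k, E k) + S.encard * c :=
  calc μ (⋃ k, D k) ≤ ∑' k, μ (D k) := measure_iUnion_le _
    _ ≤ ∑' k, (C * μ (E k) + S.indicator (fun _ => c) k) := ENNReal.tsum_le_tsum h
    _ = C * μ (⋃ k, E k) + S.encard * c := by
      rw [ENNReal.tsum_add, ENNReal.tsum_mul_left, measure_iUnion hE hEm,
        ← tsum_subtype S fun _ => c, ENNReal.tsum_set_const]

def LengthsTendToInfinity (D : ℕ → Set ℝ) : Prop :=
  ∀ M : ℝ, {n | D n ≠ ∅ ∧ volume (D n) ≤ ENNReal.ofReal M}.Finite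

theorem volume_thickening_iUnion_inter_Icc_le {D : ℕ → Set ℝ} (hD : ∀ k, IsIooOrIoi (D k))
    (hdisj : Pairwise (Disjoint on D)) {R ε : ℝ} (hR : 0 ≤ R) {F : Set ℕ}
    (hF : ∀ k ∉ F, (D k).Nonempty →
      ENNReal.ofReal (2 * R) ≤ ENNReal.ofReal ε * volume (D k)) (s r : ℝ) :
    volume (thickening R (⋃ k, D k) ∩ Icc s r) ≤ volume ((⋃ k, D k) ∩ Icc s r) +
      (ENNReal.ofReal ε * volume ((⋃ k, D k) ∩ Icc (s - R) (r + R)) +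
        (F.encard + 2) * ENNReal.ofReal (2 * R)) := by
  -- outside `F`, only the two components through `s - R` and `r + R` can stick out of the window
  set S := F ∪ ({k | s - R ∈ D k} ∪ {k | r + R ∈ D k})
  have hS : S.encard ≤ F.encard + 2 :=
    (encard_union_le _ _).trans (by gcongr; exact encard_union_setOf_mem_le_two hdisj _ _)
  have hcomp : ∀ k, volume ((thickening R (D k) \ D k) ∩ Icc s r) ≤
      ENNReal.ofReal ε * volume (D k ∩ Icc (s - R) (r + R)) +
        S.indicator (fun _ => ENNReal.ofReal (2 * R)) k := by
    intro k
    by_cases hk : k ∈ S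
    · rw [indicator_of_mem hk]
      exact le_add_left ((measure_mono inter_subset_left).trans
        ((hD k).volume_thickening_diff_le hR))
    · rw [indicator_of_notMem hk, add_zero]
      simp only [S, mem_union, mem_ofPred_eq, not_or] at hk
      exact (hD k).volume_thickening_diff_inter_Icc_le hR (hF k hk.1) hk.2.1 hk.2.2
  have hsplit : thickening R (⋃ k, D k) ∩ Icc s r ⊆
      ((⋃ k, D k) ∩ Icc s r) ∪ ⋃ k, (thickening R (D k) \ D k) ∩ Icc s r := by
    rw [← iUnion_inter, ← union_inter_distrib_right]
    exact inter_subset_inter_left _ (thickening_iUnion_subset R D)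
  calc volume (thickening R (⋃ k, D k) ∩ Icc s r)
      ≤ volume ((⋃ k, D k) ∩ Icc s r) +
          volume (⋃ k, (thickening R (D k) \ D k) ∩ Icc s r) :=
        (measure_mono hsplit).trans (measure_union_le _ _)
    _ ≤ volume ((⋃ k, D k) ∩ Icc s r) +
          (ENNReal.ofReal ε * volume ((⋃ k, D k) ∩ Icc (s - R) (r + R)) +
            S.encard * ENNReal.ofReal (2 * R)) := by
        gcongr
        rw [iUnion_inter]
        exact measure_iUnion_le_mul_add_encard_mul
          (fun i j hij => (hdisj hij).mono inter_subset_left inter_subset_left)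
          (fun k => (hD k).isOpen.measurableSet.inter measurableSet_Icc) hcomp
    _ ≤ _ := by gcongr; exact_mod_cast hS

theorem windowDominated_thickening {D : ℕ → Set ℝ} (hD : ∀ k, IsIooOrIoi (D k))
    (hdisj : Pairwise (Disjoint on D)) (hlen : LengthsTendToInfinity D) {R : ℝ} (hR : 0 < R) :
    WindowDominated (⋃ k, D k) (thickening R (⋃ k, D k)) 1 := by
  intro ε hε
  set F := {k | D k ≠ ∅ ∧ volume (D k) ≤ ENNReal.ofReal (2 * R / ε)}
  have hF : (F.encard : ℝ≥0∞) ≠ ∞ := ENat.toENNReal_ne_top.2 (hlen _).encard_lt_top.ne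
  have hlong : ∀ k ∉ F, (D k).Nonempty →
      ENNReal.ofReal (2 * R) ≤ ENNReal.ofReal ε * volume (D k) := fun k hk hne => by
    simp only [F, mem_ofPred_eq, not_and, not_le] at hk
    calc ENNReal.ofReal (2 * R) = ENNReal.ofReal ε * ENNReal.ofReal (2 * R / ε) := by
          rw [← ENNReal.ofReal_mul hε.le, mul_div_cancel₀ _ hε.ne']
      _ ≤ ENNReal.ofReal ε * volume (D k) := by gcongr; exact (hk hne.ne_empty).le
  refine ⟨(F.encard + 2) * ENNReal.ofReal (2 * R) + ENNReal.ofReal (ε * (2 * R)), by finiteness,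
    fun s r hs hsr => ?_⟩
  have hwide : ENNReal.ofReal ε * volume ((⋃ k, D k) ∩ Icc (s - R) (r + R)) ≤
      ENNReal.ofReal (ε * r) + ENNReal.ofReal (ε * (2 * R)) := by
    rw [← ENNReal.ofReal_add (by nlinarith) (by positivity), ← mul_add,
      ENNReal.ofReal_mul hε.le]
    gcongr
    refine (measure_mono inter_subset_right).trans ?_
    rw [Real.volume_Icc]
    gcongr
    linarith
  calc volume (thickening R (⋃ k, D k) ∩ Icc s r)
      ≤ volume ((⋃ k, D k) ∩ Icc s r) +
          (ENNReal.ofReal ε * volume ((⋃ k, D k) ∩ Icc (s - R) (r + R)) +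
            (F.encard + 2) * ENNReal.ofReal (2 * R)) :=
        volume_thickening_iUnion_inter_Icc_le hD hdisj hR.le hlong s r
    _ ≤ volume ((⋃ k, D k) ∩ Icc s r) + (ENNReal.ofReal (ε * r) +
          ENNReal.ofReal (ε * (2 * R)) + (F.encard + 2) * ENNReal.ofReal (2 * R)) := by
        gcongr
    _ = (1 : ℝ≥0) * volume ((⋃ k, D k) ∩ Icc s r) + ENNReal.ofReal (ε * r) +
          ((F.encard + 2) * ENNReal.ofReal (2 * R) + ENNReal.ofReal (ε * (2 * R))) := by
        rw [ENNReal.coe_one, one_mul]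
        ring

end Families

section Shrink

/-- For an unbounded `S`, `(volume S).toReal = 0`, so nothing is trimmed. -/
def shrinkRadius (S : Set ℝ) : ℝ := min ((volume S).toReal / 4) √(sInf S)

def shrink (S : Set ℝ) : Set ℝ := {x | Icc (x - shrinkRadius S) (x + shrinkRadius S) ⊆ S}

theorem shrinkRadius_nonneg (S : Set ℝ) : 0 ≤ shrinkRadius S :=
  le_min (by positivity) (Real.sqrt_nonneg _)

theorem shrink_subset (S : Set ℝ) : shrink S ⊆ S := fun x hx =>
  hx ⟨by linarith [shrinkRadius_nonneg S], by linarith [shrinkRadius_nonneg S]⟩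

theorem shrink_empty : shrink ∅ = ∅ :=
  subset_empty_iff.1 (shrink_subset ∅)

theorem thickening_shrink_subset {S : Set ℝ} {R : ℝ} (hR : R ≤ shrinkRadius S) :
    thickening R (shrink S) ⊆ S := fun x hx => by
  obtain ⟨y, hy, hxy⟩ := mem_thickening_iff.1 hx
  rw [Real.dist_eq, abs_sub_lt_iff] at hxy
  exact hy ⟨by linarith, by linarith⟩

theorem shrinkRadius_Ioo {a b : ℝ} (hab : a < b) :
    shrinkRadius (Ioo a b) = min ((b - a) / 4) √a := by
  rw [shrinkRadius, Real.volume_Ioo, ENNReal.toReal_ofReal (by linarith), csInf_Ioo hab]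

theorem shrink_Ioo (a b : ℝ) :
    shrink (Ioo a b) = Ioo (a + shrinkRadius (Ioo a b)) (b - shrinkRadius (Ioo a b)) := by
  have he := shrinkRadius_nonneg (Ioo a b)
  ext x
  change Icc _ _ ⊆ _ ↔ _
  rw [Icc_subset_Ioo_iff (by linarith), mem_Ioo]
  constructor <;> rintro ⟨h₁, h₂⟩ <;> constructor <;> linarith

theorem shrink_Ioi (a : ℝ) : shrink (Ioi a) = Ioi a := by
  have he : shrinkRadius (Ioi a) = 0 := by simp [shrinkRadius, Real.sqrt_nonneg]
  ext x
  simp [shrink, he]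

variable {D : Set ℝ}

theorem isIooOrIoi_shrink (hD : IsIooOrIoi D) : IsIooOrIoi (shrink D) := by
  obtain ⟨a, b, rfl | rfl⟩ := hD
  · exact ⟨_, _, Or.inl (shrink_Ioo a b)⟩
  · exact ⟨a, a, Or.inr (shrink_Ioi a)⟩

theorem IsIooOrIoi.volume_le_two_mul_volume_shrink (hD : IsIooOrIoi D) :
    volume D ≤ 2 * volume (shrink D) := by
  obtain ⟨a, b, rfl | rfl⟩ := hD
  · rcases le_or_gt b a with hba | hab
    · simp [Ioo_eq_empty hba.not_gt]
    have he : shrinkRadius (Ioo a b) ≤ (b - a) / 4 :=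
      (shrinkRadius_Ioo hab).le.trans (min_le_left _ _)
    rw [shrink_Ioo, Real.volume_Ioo, Real.volume_Ioo, ← ENNReal.ofReal_ofNat 2,
      ← ENNReal.ofReal_mul zero_le_two]
    exact ENNReal.ofReal_le_ofReal (by linarith)
  · rw [shrink_Ioi]
    exact le_mul_of_one_le_left' one_le_two

theorem IsIooOrIoi.volume_diff_shrink_le (hD : IsIooOrIoi D) {z : ℝ} (hz : z ∈ D) :
    volume (D \ shrink D) ≤ ENNReal.ofReal (2 * √z) := by
  obtain ⟨a, b, rfl | rfl⟩ := hD
  · have he : shrinkRadius (Ioo a b) ≤ √z :=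
      (shrinkRadius_Ioo (hz.1.trans hz.2)).le.trans <|
        (min_le_right _ _).trans (Real.sqrt_le_sqrt hz.1.le)
    have he₀ := shrinkRadius_nonneg (Ioo a b)
    set e := shrinkRadius (Ioo a b)
    have hsub : Ioo a b \ shrink (Ioo a b) ⊆ Icc a (a + e) ∪ Icc (b - e) b := by
      rw [shrink_Ioo]
      rintro x ⟨⟨hax, hxb⟩, hx⟩
      rw [mem_Ioo, not_and_or, not_lt, not_lt] at hx
      rcases hx with hx | hx
      exacts [Or.inl ⟨hax.le, hx⟩, Or.inr ⟨hx, hxb.le⟩]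
    calc volume (Ioo a b \ shrink (Ioo a b))
        ≤ volume (Icc a (a + e)) + volume (Icc (b - e) b) :=
          (measure_mono hsub).trans (measure_union_le _ _)
      _ ≤ ENNReal.ofReal (2 * √z) := by
          rw [Real.volume_Icc, Real.volume_Icc, ← ENNReal.ofReal_add (by linarith) (by linarith)]
          exact ENNReal.ofReal_le_ofReal (by linarith)
  · simp [shrink_Ioi]

theorem IsIooOrIoi.volume_inter_Icc_le_of_notMem (hD : IsIooOrIoi D) {s r : ℝ} (hs : s ∉ D)
    (hr : r ∉ D) :
    volume (D ∩ Icc s r) ≤ 2 * volume (shrink D ∩ Icc s r) := by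
  rcases (D ∩ Icc s r).eq_empty_or_nonempty with hmiss | hmeet
  · simp [hmiss]
  have hsub := hD.ordConnected.subset_Icc_of_notMem hmeet hs hr
  rw [inter_eq_left.2 hsub, inter_eq_left.2 ((shrink_subset D).trans hsub)]
  exact hD.volume_le_two_mul_volume_shrink

theorem IsIooOrIoi.volume_inter_Icc_le (hD : IsIooOrIoi D) (s r : ℝ) :
    volume (D ∩ Icc s r) ≤
      2 * volume (shrink D ∩ Icc s r) + ENNReal.ofReal (2 * √r) := by
  rcases (D ∩ Icc s r).eq_empty_or_nonempty with hmiss | ⟨z, hzD, -, hzr⟩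
  · simp [hmiss]
  have hsplit : D ∩ Icc s r ⊆ (shrink D ∩ Icc s r) ∪ (D \ shrink D) :=
    fun x ⟨hxD, hxW⟩ => (em (x ∈ shrink D)).imp (⟨·, hxW⟩) (⟨hxD, ·⟩)
  calc volume (D ∩ Icc s r)
      ≤ volume (shrink D ∩ Icc s r) + volume (D \ shrink D) :=
        (measure_mono hsplit).trans (measure_union_le _ _)
    _ ≤ 2 * volume (shrink D ∩ Icc s r) + ENNReal.ofReal (2 * √r) := by
        gcongr
        · exact le_mul_of_one_le_left' one_le_two
        · exact (hD.volume_diff_shrink_le hzD).trans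
            (ENNReal.ofReal_le_ofReal (by gcongr))

end Shrink

section ShrinkFamily

variable {D : ℕ → Set ℝ}

theorem windowDominated_shrink (hD : ∀ k, IsIooOrIoi (D k)) (hdisj : Pairwise (Disjoint on D)) :
    WindowDominated (⋃ k, shrink (D k)) (⋃ k, D k) 2 := by
  intro ε hε
  refine ⟨ENNReal.ofReal (4 / ε), ENNReal.ofReal_ne_top, fun s r hs hsr => ?_⟩
  have hr : 0 ≤ r := hs.trans hsr
  -- only the two components through `s` and `r` can stick out of the window
  set S := {k | s ∈ D k} ∪ {k | r ∈ D k}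
  have hcomp : ∀ k, volume (D k ∩ Icc s r) ≤
      2 * volume (shrink (D k) ∩ Icc s r) +
        S.indicator (fun _ => ENNReal.ofReal (2 * √r)) k := by
    intro k
    by_cases hk : k ∈ S
    · rw [indicator_of_mem hk]
      exact (hD k).volume_inter_Icc_le s r
    · rw [indicator_of_notMem hk, add_zero]
      simp only [S, mem_union, mem_ofPred_eq, not_or] at hk
      exact (hD k).volume_inter_Icc_le_of_notMem hk.1 hk.2
  have hamgm : 4 * √r ≤ ε * r + 4 / ε := by
    have hsq : (ε * √r) ^ 2 = ε * (ε * r) := by rw [mul_pow, Real.sq_sqrt hr]; ring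
    refine le_of_mul_le_mul_left ?_ hε
    rw [mul_add, mul_div_cancel₀ _ hε.ne']
    nlinarith [sq_nonneg (ε * √r - 2)]
  rw [iUnion_inter, iUnion_inter]
  calc volume (⋃ k, D k ∩ Icc s r)
      ≤ 2 * volume (⋃ k, shrink (D k) ∩ Icc s r) + S.encard * ENNReal.ofReal (2 * √r) :=
        measure_iUnion_le_mul_add_encard_mul
          (fun i j hij => (hdisj hij).mono (inter_subset_left.trans (shrink_subset _))
            (inter_subset_left.trans (shrink_subset _)))
          (fun k => (isIooOrIoi_shrink (hD k)).isOpen.measurableSet.inter measurableSet_Icc) hcomp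
    _ ≤ 2 * volume (⋃ k, shrink (D k) ∩ Icc s r) + 2 * ENNReal.ofReal (2 * √r) := by
        gcongr
        exact_mod_cast encard_union_setOf_mem_le_two hdisj s r
    _ ≤ ((2 : ℝ≥0) : ℝ≥0∞) * volume (⋃ k, shrink (D k) ∩ Icc s r) +
          ENNReal.ofReal (ε * r) + ENNReal.ofReal (4 / ε) := by
        rw [add_assoc, ENNReal.coe_ofNat, ← ENNReal.ofReal_ofNat 2,
          ← ENNReal.ofReal_mul zero_le_two]
        gcongr
        exact (ENNReal.ofReal_le_ofReal (by linarith)).trans ENNReal.ofReal_add_le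

theorem LengthsTendToInfinity.of_volume_le_mul {C : ℕ → Set ℝ} (hC : LengthsTendToInfinity C)
    (hDC : ∀ k, D k ⊆ C k) (c : ℝ≥0) (hvol : ∀ k, volume (C k) ≤ c * volume (D k)) :
    LengthsTendToInfinity D := fun M =>
  (hC (c * M)).subset fun k ⟨hne, hle⟩ =>
    ⟨fun h => hne (subset_empty_iff.1 (h ▸ hDC k)),
      calc volume (C k) ≤ c * volume (D k) := hvol k
        _ ≤ c * ENNReal.ofReal M := by gcongr
        _ = ENNReal.ofReal (c * M) := by
          rw [ENNReal.ofReal_mul c.coe_nonneg, ENNReal.ofReal_coe_nnreal]⟩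

theorem finite_setOf_shrinkRadius_lt (hD : ∀ k, IsIooOrIoi (D k))
    (hdisj : Pairwise (Disjoint on D)) (hlen : LengthsTendToInfinity D) (h0 : ∀ k, D k ⊆ Ici 0)
    {R : ℝ} (hR : 0 < R) : {k | (D k).Nonempty ∧ shrinkRadius (D k) < R}.Finite := by
  set B := Ioo 0 (R ^ 2 + 4 * R)
  have hunbdd : {k | ∃ a, D k = Ioi a}.Subsingleton := by
    rintro i ⟨a, hi⟩ j ⟨b, hj⟩
    by_contra hij
    have hmem : max a b + 1 ∈ Ioi a ∩ Ioi b :=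
      ⟨(le_max_left a b).trans_lt (lt_add_one _), (le_max_right a b).trans_lt (lt_add_one _)⟩
    exact disjoint_left.1 (hdisj hij) (hi ▸ hmem.1) (hj ▸ hmem.2)
  -- a long component with `√a < R` starts inside the bounded set `B`
  have hlow : {k | ENNReal.ofReal (4 * R) ≤ volume (D k ∩ B)}.Finite :=
    Measure.finite_const_le_meas_of_disjoint_iUnion volume (by simpa using hR)
      (fun k => (hD k).isOpen.measurableSet.inter measurableSet_Ioo)
      (fun i j hij => (hdisj hij).mono inter_subset_left inter_subset_left)
      ((measure_mono (iUnion_subset fun _ => inter_subset_right)).trans_lt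
        measure_Ioo_lt_top).ne
  refine (((hlen (4 * R)).union hunbdd.finite).union hlow).subset ?_
  rintro k ⟨hne, hlt⟩
  obtain ⟨a, b, ha, hk | hk⟩ := (hD k).exists_nonneg (h0 k)
  · have hab : a < b := nonempty_Ioo.1 (hk ▸ hne)
    rcases le_or_gt (b - a) (4 * R) with hshort | hlong
    · exact Or.inl (Or.inl ⟨hne.ne_empty, by
        rw [hk, Real.volume_Ioo]; exact ENNReal.ofReal_le_ofReal hshort⟩)
    rw [hk, shrinkRadius_Ioo hab, min_lt_iff] at hlt
    have haR : a < R ^ 2 := (Real.sqrt_lt' hR).1 (hlt.resolve_left (by linarith))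
    refine Or.inr ?_
    calc ENNReal.ofReal (4 * R) = volume (Ioo a (a + 4 * R)) := by
          rw [Real.volume_Ioo, add_sub_cancel_left]
      _ ≤ volume (D k ∩ B) := measure_mono fun x ⟨hax, hxa⟩ =>
          ⟨hk ▸ ⟨hax, by linarith⟩, by linarith, by linarith⟩
  · exact Or.inl (Or.inr ⟨a, hk⟩)

theorem isBounded_thickening_iUnion_shrink_diff (hD : ∀ k, IsIooOrIoi (D k))
    (hdisj : Pairwise (Disjoint on D)) (hlen : LengthsTendToInfinity D) (h0 : ∀ k, D k ⊆ Ici 0)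
    {R : ℝ} (hR : 0 < R) :
    Bornology.IsBounded (thickening R (⋃ k, shrink (D k)) \ ⋃ k, D k) := by
  refine ((Bornology.isBounded_biUnion (finite_setOf_shrinkRadius_lt hD hdisj hlen h0 hR)).2
    fun k _ => (hD k).isBounded_thickening_diff R).subset ?_
  rintro x ⟨hx, hxD⟩
  obtain ⟨k, hk⟩ := mem_iUnion.1 ((thickening_iUnion R _).subset hx)
  have hxk : x ∉ D k := fun h => hxD (mem_iUnion.2 ⟨k, h⟩)
  refine mem_iUnion₂.2 ⟨k, ⟨nonempty_iff_ne_empty.2 fun hk0 => ?_, not_le.1 fun hle => ?_⟩,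
    thickening_subset_of_subset R (shrink_subset _) hk, hxk⟩
  · rw [hk0, shrink_empty, thickening_empty] at hk
    exact hk
  · exact hxk (thickening_shrink_subset hle hk)

end ShrinkFamily

section Components

theorem disjointed_eq_self_or_eq_empty {α ι : Type*} [Preorder ι] [LocallyFiniteOrderBot ι]
    {f : ι → Set α} (hf : ∀ i j, f i = f j ∨ Disjoint (f i) (f j)) (k : ι) :
    disjointed f k = f k ∨ disjointed f k = ∅ := by
  by_cases h : ∀ j < k, Disjoint (f j) (f k)
  · exact Or.inl (disjointed_eq_self h)
  push Not at h
  obtain ⟨j, hjk, hj⟩ := h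
  refine Or.inr (eq_empty_of_forall_notMem fun x hx => ?_)
  rw [disjointed_eq_inter_compl] at hx
  exact mem_iInter₂.1 hx.2 j hjk (((hf j k).resolve_right hj).symm ▸ hx.1)

theorem connectedComponentIn_eq_or_disjoint {α : Type*} [TopologicalSpace α] (F : Set α)
    (x y : α) :
    connectedComponentIn F x = connectedComponentIn F y ∨
      Disjoint (connectedComponentIn F x) (connectedComponentIn F y) := by
  refine or_iff_not_imp_right.2 fun h => ?_
  obtain ⟨z, hzx, hzy⟩ := not_disjoint_iff.1 h
  rw [connectedComponentIn_eq hzx, connectedComponentIn_eq hzy]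

theorem IsOpen.isIooOrIoi {s : Set ℝ} (hs : IsOpen s) (hc : IsPreconnected s)
    (hb : BddBelow s) : IsIooOrIoi s := by
  rcases s.eq_empty_or_nonempty with rfl | hne
  · exact isIooOrIoi_empty
  have hinf : s ⊆ Ioi (sInf s) := fun y hy => (csInf_le hb hy).lt_of_ne fun h => by
    obtain ⟨z, hz, hzs⟩ := Filter.Eventually.exists_lt (hs.mem_nhds (h ▸ hy))
    exact (csInf_le hb hzs).not_gt hz
  by_cases ha : BddAbove s
  · have hsup : s ⊆ Iio (sSup s) := fun y hy => (le_csSup ha hy).lt_of_ne fun h => by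
      obtain ⟨z, hz, hzs⟩ := Filter.Eventually.exists_gt (hs.mem_nhds (h.symm ▸ hy))
      exact (le_csSup ha hzs).not_gt hz
    exact ⟨sInf s, sSup s, Or.inl <| Subset.antisymm (fun y hy => ⟨hinf hy, hsup hy⟩)
      (IsConnected.Ioo_csInf_csSup_subset ⟨hne, hc⟩ hb ha)⟩
  · exact ⟨sInf s, 0, Or.inr (hinf.antisymm (hc.Ioi_csInf_subset hb ha))⟩

theorem LengthsTendToInfinity.of_forall_exists_subset {I C : ℕ → Set ℝ}
    (hI : LengthsTendToInfinity I) (hC : Pairwise (Disjoint on C))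
    (h : ∀ k, (C k).Nonempty → ∃ n, (I n).Nonempty ∧ I n ⊆ C k) :
    LengthsTendToInfinity C := by
  intro M
  have hsub : ∀ n, {k | (I n).Nonempty ∧ I n ⊆ C k}.Subsingleton := by
    rintro n i ⟨⟨y, hy⟩, hi⟩ j ⟨-, hj⟩
    by_contra hij
    exact disjoint_left.1 (hC hij) (hi hy) (hj hy)
  refine ((hI M).biUnion fun n _ => (hsub n).finite).subset ?_
  rintro k ⟨hne, hle⟩
  obtain ⟨n, hn, hnk⟩ := h k (nonempty_iff_ne_empty.2 hne)
  exact mem_iUnion₂.2 ⟨n, ⟨hn.ne_empty, (measure_mono hnk).trans hle⟩, hn, hnk⟩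

theorem exists_pairwise_disjoint_iUnion_eq {I : ℕ → Set ℝ} (hI : ∀ n, IsIooOrIoi (I n))
    (hb : BddBelow (⋃ n, I n)) (hlen : LengthsTendToInfinity I) :
    ∃ C : ℕ → Set ℝ, (∀ k, IsIooOrIoi (C k)) ∧ Pairwise (Disjoint on C) ∧
      LengthsTendToInfinity C ∧ ⋃ k, C k = ⋃ n, I n := by
  set U := ⋃ n, I n
  have hU : IsOpen U := isOpen_iUnion fun n => (hI n).isOpen
  -- list the components through the rationals they contain; `disjointed` drops the repetitions
  obtain ⟨e, he⟩ := exists_surjective_nat ℚ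
  set f : ℕ → Set ℝ := fun k => connectedComponentIn U (e k)
  have hcases := disjointed_eq_self_or_eq_empty (f := f) fun i j =>
    connectedComponentIn_eq_or_disjoint U _ _
  have hfU : ⋃ k, f k = U := by
    refine (iUnion_subset fun k => connectedComponentIn_subset _ _).antisymm fun x hx => ?_
    obtain ⟨q, hq⟩ := Rat.denseRange_cast.exists_mem_open hU.connectedComponentIn
      ⟨x, mem_connectedComponentIn hx⟩
    obtain ⟨k, rfl⟩ := he q
    exact mem_iUnion.2 ⟨k, connectedComponentIn_eq hq ▸ mem_connectedComponentIn hx⟩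
  refine ⟨disjointed f, fun k => ?_, disjoint_disjointed f, ?_, iUnion_disjointed.trans hfU⟩
  · rcases hcases k with h | h <;> rw [h]
    · exact hU.connectedComponentIn.isIooOrIoi isPreconnected_connectedComponentIn
        (hb.mono (connectedComponentIn_subset _ _))
    · exact isIooOrIoi_empty
  refine hlen.of_forall_exists_subset (disjoint_disjointed f) fun k ⟨y, hy⟩ => ?_
  have hk : disjointed f k = f k := (hcases k).resolve_right (nonempty_of_mem hy).ne_empty
  rw [hk] at hy ⊢
  obtain ⟨n, hn⟩ := mem_iUnion.1 (connectedComponentIn_subset _ _ hy)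
  refine ⟨n, ⟨y, hn⟩, ?_⟩
  rw [show f k = _ from connectedComponentIn_eq hy]
  exact (hI n).ordConnected.isPreconnected.subset_connectedComponentIn hn (subset_iUnion I n)

end Components

/-- Shrunk observation set: given a family of open intervals `I_n ⊆ [0,∞)` whose lengths tend
to `+∞` if the family is infinite, there is a family of pairwise disjoint open intervals
`J̃_n ⊆ [0,∞)` (lengths `→ +∞` if infinitely many) such that `Ĩ = ⋃ J̃_n` satisfies
(i) `Ĩ ⊆ I`; (ii) `Ĩ_R ∖ I` is bounded for every `R > 0`;
(iii) `κ_⋆(Ĩ) = κ_⋆(Ĩ_R) = κ_⋆(I) = κ_⋆(I_R)` for every `R > 0`. -/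
theorem stmt_14 (I : ℕ → Set ℝ)
    (hIiv : ∀ n, ∃ a b : ℝ, 0 ≤ a ∧ (I n = Set.Ioo a b ∨ I n = Set.Ioi a))
    (hIlen : ∀ M : ℝ, {n : ℕ | I n ≠ ∅ ∧ volume (I n) ≤ ENNReal.ofReal M}.Finite) :
    ∃ J : ℕ → Set ℝ,
      (∀ n, ∃ a b : ℝ, 0 ≤ a ∧ (J n = Set.Ioo a b ∨ J n = Set.Ioi a)) ∧
      (Pairwise fun m n => Disjoint (J m) (J n)) ∧
      (∀ M : ℝ, {n : ℕ | J n ≠ ∅ ∧ volume (J n) ≤ ENNReal.ofReal M}.Finite) ∧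
      (⋃ n, J n) ⊆ (⋃ n, I n) ∧
      (∀ R : ℝ, 0 < R → Bornology.IsBounded (thickenR (⋃ n, J n) R \ ⋃ n, I n)) ∧
      (∀ R : ℝ, 0 < R →
        kappaStar (⋃ n, J n) = kappaStar (thickenR (⋃ n, J n) R) ∧
        kappaStar (thickenR (⋃ n, J n) R) = kappaStar (⋃ n, I n) ∧
        kappaStar (⋃ n, I n) = kappaStar (thickenR (⋃ n, I n) R)) := by
  have hI : ∀ n, IsIooOrIoi (I n) := fun n =>
    let ⟨a, b, _, h⟩ := hIiv n
    ⟨a, b, h⟩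
  have hI0 : (⋃ n, I n) ⊆ Ici 0 := iUnion_subset fun n => by
    obtain ⟨a, b, ha, h | h⟩ := hIiv n <;> rw [h]
    exacts [Ioo_subset_Ioi_self.trans (Ioi_subset_Ici ha), Ioi_subset_Ici ha]
  obtain ⟨C, hC, hCdisj, hClen, hCU⟩ :=
    exists_pairwise_disjoint_iUnion_eq hI ⟨0, fun _ hx => hI0 hx⟩ hIlen
  have hC0 : ∀ k, C k ⊆ Ici 0 := fun k => (hCU ▸ subset_iUnion C k).trans hI0
  have hJ : ∀ k, IsIooOrIoi (shrink (C k)) := fun k => isIooOrIoi_shrink (hC k)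
  have hJdisj : Pairwise (Disjoint on fun k => shrink (C k)) := fun i j hij =>
    (hCdisj hij).mono (shrink_subset _) (shrink_subset _)
  have hJlen : LengthsTendToInfinity fun k => shrink (C k) :=
    hClen.of_volume_le_mul (fun _ => shrink_subset _) 2 fun k =>
      (hC k).volume_le_two_mul_volume_shrink
  have hJC : (⋃ k, shrink (C k)) ⊆ ⋃ k, C k := iUnion_mono fun _ => shrink_subset _
  refine ⟨fun k => shrink (C k), fun k => (hJ k).exists_nonneg ((shrink_subset _).trans (hC0 k)),
    hJdisj, hJlen, hCU ▸ hJC, fun R hR => ?_, fun R hR => ?_⟩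
  · rw [thickenR_eq_thickening, ← hCU]
    exact isBounded_thickening_iUnion_shrink_diff hC hCdisj hClen hC0 hR
  simp only [thickenR_eq_thickening, ← hCU]
  have hJC' := kappaStar_eq_of_windowDominated hJC (windowDominated_shrink hC hCdisj)
  have hJ' := kappaStar_eq_of_windowDominated (self_subset_thickening hR _)
    (windowDominated_thickening hJ hJdisj hJlen hR)
  have hC' := kappaStar_eq_of_windowDominated (self_subset_thickening hR _)
    (windowDominated_thickening hC hCdisj hClen hR)
  exact ⟨hJ', hJ'.symm.trans hJC', hC'⟩
end
end

section
/- Let p, q be positive integers and let d₀ ∈ [0, 1]. For λ ∈ [0,1] and s ∈ [0,1] set g_λ(s) = (1−λ)·sin²((π/2)·s·d₀/p) + λ·sin²((π/2)·(1−s)·d₀/q). Then max_{λ∈[0,1]} min_{s∈[0,1]} g_λ(s) = sin²((π/2)·d₀/(p+q)), and the max–min is attained at λ₀ = q/(p+q) and s₀ = p/(p+q), i.e. min_{s∈[0,1]} g_{λ₀}(s) = g_{λ₀}(s₀) = sin²((π/2)·d₀/(p+q)). -/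
/-!
Write `α = π d₀ / (2p)` and `β = π d₀ / (2q)`, so that `g_λ(s) = (1-λ) sin²(α s) + λ sin²(β (1-s))`.
At `s₀ = p/(p+q)` both sine arguments equal `π d₀ / (2(p+q))`, so `g_λ(s₀)` is that value for
every `λ`, and `min_s g_λ ≤ g_λ(s₀)`. For `λ₀ = q/(p+q)` the weights balance, `(1-λ₀) α = λ₀ β`,
and `g_{λ₀}'(s)` is a nonnegative multiple of `sin (2αs) - sin (2β(1-s))`. Since the two
arguments are nonnegative with sum at most `π`, its sign is that of `αs - β(1-s)`: `g_{λ₀}`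
decreases up to `s₀` and increases after it.
-/

noncomputable section

/-- `g_λ(s) = (1-λ) sin²((π/2) s d₀ / p) + λ sin²((π/2)(1-s) d₀ / q)`. -/
def gfun (p q : ℕ) (d₀ l s : ℝ) : ℝ :=
  (1 - l) * Real.sin (Real.pi / 2 * (s * d₀) / (p : ℝ)) ^ 2 +
    l * Real.sin (Real.pi / 2 * ((1 - s) * d₀) / (q : ℝ)) ^ 2

open Real Set

lemma sin_le_sin_of_add_le_pi {x y : ℝ} (hx : 0 ≤ x) (hxy : x ≤ y) (h : x + y ≤ π) :
    sin x ≤ sin y := by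
  have hhalf : 0 ≤ sin ((y - x) / 2) := sin_nonneg_of_nonneg_of_le_pi (by linarith) (by linarith)
  have hmid : 0 ≤ cos ((y + x) / 2) := cos_nonneg_of_mem_Icc ⟨by linarith [pi_pos], by linarith⟩
  nlinarith [sin_sub_sin y x]

def mixedSinSq (α β l s : ℝ) : ℝ :=
  (1 - l) * sin (α * s) ^ 2 + l * sin (β * (1 - s)) ^ 2

lemma mixedSinSq_one_sub (α β l s : ℝ) :
    mixedSinSq β α (1 - l) (1 - s) = mixedSinSq α β l s := by
  simp only [mixedSinSq, sub_sub_cancel]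
  ring

lemma mixedSinSq_of_eq {α β s : ℝ} (l : ℝ) (h : β * (1 - s) = α * s) :
    mixedSinSq α β l s = sin (α * s) ^ 2 := by
  rw [mixedSinSq, h]
  ring

lemma mixedSinSq_nonneg (α β : ℝ) {l : ℝ} (hl : l ∈ Icc (0 : ℝ) 1) (s : ℝ) :
    0 ≤ mixedSinSq α β l s := by
  have := sub_nonneg.2 hl.2
  have := hl.1
  unfold mixedSinSq
  positivity

lemma hasDerivAt_mixedSinSq (α β l s : ℝ) :
    HasDerivAt (mixedSinSq α β l)
      ((1 - l) * α * sin (2 * (α * s)) - l * β * sin (2 * (β * (1 - s)))) s := by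
  have hA : HasDerivAt (fun x => α * x) α s := by
    simpa using (hasDerivAt_id s).const_mul α
  have hB : HasDerivAt (fun x => β * (1 - x)) (-β) s := by
    simpa using ((hasDerivAt_id s).const_sub 1).const_mul β
  refine (((hA.sin.pow 2).const_mul (1 - l)).add ((hB.sin.pow 2).const_mul l)).congr_deriv ?_
  simp only [sin_two_mul, Nat.cast_ofNat]
  ring

lemma monotoneOn_mixedSinSq {α β l s₀ : ℝ} (hα : 0 ≤ α) (hβ : 0 ≤ β) (hαπ : α ≤ π / 2)
    (hβπ : β ≤ π / 2) (hl : 0 ≤ l) (hw : (1 - l) * α = l * β)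
    (hs₀ : β * (1 - s₀) ≤ α * s₀) (h0 : 0 ≤ s₀) :
    MonotoneOn (mixedSinSq α β l) (Icc s₀ 1) := by
  have hd := hasDerivAt_mixedSinSq α β l
  refine monotoneOn_of_deriv_nonneg (convex_Icc _ _)
    (fun x _ => (hd x).continuousAt.continuousWithinAt)
    (fun x _ => (hd x).differentiableAt.differentiableWithinAt) fun x hx => ?_
  rw [interior_Icc] at hx
  obtain ⟨hx0, hx1⟩ := hx
  rw [(hd x).deriv, hw, ← mul_sub]
  refine mul_nonneg (mul_nonneg hl hβ) (sub_nonneg.2 (sin_le_sin_of_add_le_pi ?_ ?_ ?_))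
  · nlinarith
  · nlinarith
  · nlinarith

lemma isMinOn_mixedSinSq {α β l s₀ : ℝ} (hα : 0 ≤ α) (hβ : 0 ≤ β) (hαπ : α ≤ π / 2)
    (hβπ : β ≤ π / 2) (hl : l ∈ Icc (0 : ℝ) 1) (hw : (1 - l) * α = l * β)
    (hs₀ : β * (1 - s₀) = α * s₀) (h₀ : s₀ ∈ Icc (0 : ℝ) 1) :
    IsMinOn (mixedSinSq α β l) (Icc 0 1) s₀ := by
  refine isMinOn_iff.2 fun s ⟨hs0, hs1⟩ => ?_
  rcases le_total s₀ s with h | h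
  · exact monotoneOn_mixedSinSq hα hβ hαπ hβπ hl.1 hw hs₀.le h₀.1 ⟨le_rfl, h₀.2⟩ ⟨h, hs1⟩ h
  -- reflecting `s ↦ 1 - s` exchanges `(α, l)` with `(β, 1 - l)`
  · rw [← mixedSinSq_one_sub α, ← mixedSinSq_one_sub α]
    refine monotoneOn_mixedSinSq hβ hα hβπ hαπ (sub_nonneg.2 hl.2) (by linarith)
      (by rw [sub_sub_cancel]; linarith) (sub_nonneg.2 h₀.2) ⟨le_rfl, by linarith⟩
      ⟨by linarith, by linarith⟩ (by linarith)

/-- `max_{λ ∈ [0,1]} min_{s ∈ [0,1]} g_λ(s) = sin²((π/2) d₀/(p+q))`, attained at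
`λ₀ = q/(p+q)`, `s₀ = p/(p+q)`. -/
theorem stmt_15 (p q : ℕ) (hp : 0 < p) (hq : 0 < q) (d₀ : ℝ)
    (hd₀ : d₀ ∈ Set.Icc (0 : ℝ) 1) :
    IsGreatest ((fun l : ℝ => sInf (gfun p q d₀ l '' Set.Icc (0 : ℝ) 1)) '' Set.Icc (0 : ℝ) 1)
      (Real.sin (Real.pi / 2 * d₀ / ((p : ℝ) + q)) ^ 2) ∧
    IsLeast (gfun p q d₀ ((q : ℝ) / ((p : ℝ) + q)) '' Set.Icc (0 : ℝ) 1)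
      (Real.sin (Real.pi / 2 * d₀ / ((p : ℝ) + q)) ^ 2) ∧
    gfun p q d₀ ((q : ℝ) / ((p : ℝ) + q)) ((p : ℝ) / ((p : ℝ) + q)) =
      Real.sin (Real.pi / 2 * d₀ / ((p : ℝ) + q)) ^ 2 := by
  obtain ⟨hd0, hd1⟩ := hd₀
  have hP : (1 : ℝ) ≤ p := Nat.one_le_cast.2 hp
  have hQ : (1 : ℝ) ≤ q := Nat.one_le_cast.2 hq
  have hrate (n : ℝ) (hn : 1 ≤ n) : 0 ≤ π / 2 * d₀ / n ∧ π / 2 * d₀ / n ≤ π / 2 :=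
    ⟨by positivity, by rw [div_le_iff₀ (by positivity)]; nlinarith [pi_pos]⟩
  have hs₀ : (p : ℝ) / (p + q) ∈ Icc (0 : ℝ) 1 :=
    ⟨by positivity, by rw [div_le_one₀ (by positivity)]; linarith⟩
  have hl₀ : (q : ℝ) / (p + q) ∈ Icc (0 : ℝ) 1 :=
    ⟨by positivity, by rw [div_le_one₀ (by positivity)]; linarith⟩
  have hg (l : ℝ) : gfun p q d₀ l = mixedSinSq (π / 2 * d₀ / p) (π / 2 * d₀ / q) l := by
    ext s
    simp only [gfun, mixedSinSq]
    ring_nf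
  have hbalance : π / 2 * d₀ / q * (1 - p / (p + q)) = π / 2 * d₀ / p * (p / (p + q)) := by
    field_simp
    ring
  have hval (l : ℝ) : mixedSinSq (π / 2 * d₀ / p) (π / 2 * d₀ / q) l (p / (p + q)) =
      sin (π / 2 * d₀ / (p + q)) ^ 2 := by
    rw [mixedSinSq_of_eq _ hbalance]
    field_simp
  have hmin := isMinOn_mixedSinSq (hrate p hP).1 (hrate q hQ).1 (hrate p hP).2 (hrate q hQ).2 hl₀
    (by field_simp; ring) hbalance hs₀
  have hleast :
      IsLeast (gfun p q d₀ (q / (p + q)) '' Icc 0 1) (sin (π / 2 * d₀ / (p + q)) ^ 2) := by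
    rw [hg, ← hval (q / (p + q))]
    exact ⟨mem_image_of_mem _ hs₀, forall_mem_image.2 (isMinOn_iff.1 hmin)⟩
  refine ⟨⟨⟨_, hl₀, hleast.csInf_eq⟩, ?_⟩, hleast, by rw [hg, hval]⟩
  rintro _ ⟨l, hl, rfl⟩
  dsimp only
  rw [hg, ← hval l]
  exact csInf_le ⟨0, forall_mem_image.2 fun s _ => mixedSinSq_nonneg _ _ hl s⟩
    (mem_image_of_mem _ hs₀)

end
end

section
/- Let ν₁ > 0, let p, q be coprime positive integers, let ν₂ = (p/q)·ν₁, and set T = 2πq/ν₁ (so that T = 2πp/ν₂). Then for all θ₁, θ₂ ∈ ℝ, the infimum of |t₁ − t₂| over all pairs (t₁, t₂) ∈ ℝ² with sin(ν₁t₁ + θ₁) = 0 and sin(ν₂t₂ + θ₂) = 0 equals (T/(4pq)) · dist((pθ₁ − qθ₂)/(π/2), 2ℤ) = (T/(2pq)) · dist((pθ₁ − qθ₂)/π, ℤ), and this infimum is attained. -/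
/-!
Zeros of `sin (ν₁ t + θ₁)` and `sin (ν₂ t + θ₂)` are `t₁ = (mπ - θ₁)/ν₁` and
`t₂ = (nπ - θ₂)/ν₂` with `m, n ∈ ℤ`. Since `pν₁ = qν₂`, their differences satisfy
`pν₁ (t₁ - t₂) = (pm - qn)π - (pθ₁ - qθ₂)`, and by Bézout `pm - qn` runs through all of `ℤ`.
So the closest zeros are at distance `π/(pν₁)` times the distance from `(pθ₁ - qθ₂)/π` to `ℤ`,
attained at the nearest integer.
-/

open Real Metric Pointwise

theorem infDist_intCast_eq_abs_sub_round (x : ℝ) :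
    infDist x {y : ℝ | ∃ k : ℤ, y = k} = |x - round x| := by
  refine le_antisymm ?_ ?_
  · have hround : ((round x : ℤ) : ℝ) ∈ {y : ℝ | ∃ k : ℤ, y = k} := ⟨round x, rfl⟩
    simpa only [Real.dist_eq] using infDist_le_dist_of_mem hround
  · refine (le_infDist ?_).2 ?_
    · exact ⟨0, 0, Int.cast_zero.symm⟩
    · rintro _ ⟨k, rfl⟩
      simpa only [Real.dist_eq] using round_le x k

theorem infDist_two_mul_intCast_eq (x : ℝ) :
    infDist (2 * x) {y : ℝ | ∃ k : ℤ, y = 2 * k} = 2 * |x - round x| := by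
  have hset : {y : ℝ | ∃ k : ℤ, y = 2 * k} = (2 : ℝ) • {y : ℝ | ∃ k : ℤ, y = k} := by
    ext y
    simp [Set.mem_smul_set, eq_comm]
  rw [hset, ← smul_eq_mul, infDist_smul₀ two_ne_zero, infDist_intCast_eq_abs_sub_round,
    Real.norm_two]

theorem exists_sin_zeros_sub_eq_iff {ν₁ ν₂ θ₁ θ₂ s : ℝ} {p q : ℤ} (hpq : IsCoprime p q)
    (hν₁ : ν₁ ≠ 0) (hq : q ≠ 0) (hν : p * ν₁ = q * ν₂) :
    (∃ t₁ t₂ : ℝ, sin (ν₁ * t₁ + θ₁) = 0 ∧ sin (ν₂ * t₂ + θ₂) = 0 ∧ t₁ - t₂ = s) ↔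
      ∃ k : ℤ, p * ν₁ * s = k * π - (p * θ₁ - q * θ₂) := by
  simp only [sin_eq_zero_iff]
  constructor
  · rintro ⟨t₁, t₂, ⟨m, hm⟩, ⟨n, hn⟩, rfl⟩
    refine ⟨p * m - q * n, ?_⟩
    push_cast
    linear_combination -p * hm + q * hn - t₂ * hν
  · rintro ⟨k, hk⟩
    obtain ⟨a, b, hab⟩ := hpq
    -- Bézout: `p (ka) - q (-kb) = k`
    set m : ℤ := k * a
    set n : ℤ := -(k * b)
    have hmn : (p : ℝ) * m - q * n = k := by
      exact_mod_cast (by linear_combination k * hab : p * m - q * n = k)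
    set t₁ := (m * π - θ₁) / ν₁
    have ht₁ : ν₁ * t₁ = m * π - θ₁ := mul_div_cancel₀ _ hν₁
    refine ⟨t₁, t₁ - s, ⟨m, by linarith⟩, ⟨n, ?_⟩, sub_sub_cancel t₁ s⟩
    apply mul_left_cancel₀ (Int.cast_ne_zero.2 hq : (q : ℝ) ≠ 0)
    linear_combination (t₁ - s) * hν - p * ht₁ + hk - π * hmn

theorem isLeast_abs_sub_sin_zeros {ν₁ ν₂ θ₁ θ₂ : ℝ} {p q : ℤ} (hpq : IsCoprime p q)
    (hp : p ≠ 0) (hq : q ≠ 0) (hν₁ : ν₁ ≠ 0) (hν : p * ν₁ = q * ν₂) :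
    IsLeast {r : ℝ | ∃ t₁ t₂ : ℝ,
        sin (ν₁ * t₁ + θ₁) = 0 ∧ sin (ν₂ * t₂ + θ₂) = 0 ∧ r = |t₁ - t₂|}
      (π / |p * ν₁| * |(p * θ₁ - q * θ₂) / π - round ((p * θ₁ - q * θ₂) / π)|) := by
  set x := (p * θ₁ - q * θ₂) / π
  have hpν : (p : ℝ) * ν₁ ≠ 0 := mul_ne_zero (Int.cast_ne_zero.2 hp) hν₁
  have hx : x * π = p * θ₁ - q * θ₂ := div_mul_cancel₀ _ pi_ne_zero
  have habs_eq {s : ℝ} {k : ℤ} (hs : p * ν₁ * s = k * π - (p * θ₁ - q * θ₂)) :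
      |s| = π / |p * ν₁| * |x - k| := by
    have hs' : s = -(π / (p * ν₁)) * (x - k) := by
      rw [← hx] at hs
      field_simp
      linear_combination hs
    rw [hs', abs_mul, abs_neg, abs_div, abs_of_pos pi_pos]
  constructor
  · obtain ⟨t₁, t₂, h₁, h₂, hs⟩ := (exists_sin_zeros_sub_eq_iff hpq hν₁ hq hν).2
      ⟨round x, mul_div_cancel₀ (round x * π - (p * θ₁ - q * θ₂)) hpν⟩
    exact ⟨t₁, t₂, h₁, h₂, (habs_eq (hs ▸ mul_div_cancel₀ _ hpν)).symm⟩
  · rintro _ ⟨t₁, t₂, h₁, h₂, rfl⟩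
    obtain ⟨k, hk⟩ := (exists_sin_zeros_sub_eq_iff hpq hν₁ hq hν).1 ⟨t₁, t₂, h₁, h₂, rfl⟩
    rw [habs_eq hk]
    exact mul_le_mul_of_nonneg_left (round_le x k) (by positivity)

/-- Minimal distance between zeros of the two coordinate oscillations of a rational
anisotropic harmonic oscillator: with `ν₂ = (p/q) ν₁` (`p, q` coprime) and period
`T = 2πq/ν₁`, the minimum of `|t₁ - t₂|` over zeros `t₁` of `sin(ν₁ t + θ₁)` and `t₂` of
`sin(ν₂ t + θ₂)` equals `(T/(4pq)) dist((pθ₁ - qθ₂)/(π/2), 2ℤ)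
= (T/(2pq)) dist((pθ₁ - qθ₂)/π, ℤ)`, and it is attained. -/
theorem stmt_16 (ν₁ : ℝ) (hν₁ : 0 < ν₁) (p q : ℕ) (hp : 0 < p) (hq : 0 < q)
    (hpq : Nat.Coprime p q) (ν₂ T : ℝ)
    (hν₂ : ν₂ = (p : ℝ) / (q : ℝ) * ν₁) (hT : T = 2 * Real.pi * (q : ℝ) / ν₁)
    (θ₁ θ₂ : ℝ) :
    IsLeast {r : ℝ | ∃ t₁ t₂ : ℝ,
        Real.sin (ν₁ * t₁ + θ₁) = 0 ∧ Real.sin (ν₂ * t₂ + θ₂) = 0 ∧ r = |t₁ - t₂|}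
      (T / (4 * (p : ℝ) * q) *
        Metric.infDist (((p : ℝ) * θ₁ - (q : ℝ) * θ₂) / (Real.pi / 2))
          {y : ℝ | ∃ k : ℤ, y = 2 * (k : ℝ)}) ∧
    T / (4 * (p : ℝ) * q) *
        Metric.infDist (((p : ℝ) * θ₁ - (q : ℝ) * θ₂) / (Real.pi / 2))
          {y : ℝ | ∃ k : ℤ, y = 2 * (k : ℝ)} =
      T / (2 * (p : ℝ) * q) *
        Metric.infDist (((p : ℝ) * θ₁ - (q : ℝ) * θ₂) / Real.pi)
          {y : ℝ | ∃ k : ℤ, y = (k : ℝ)} := by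
  have hp' : (0 : ℝ) < p := Nat.cast_pos.2 hp
  have hleast := isLeast_abs_sub_sin_zeros (ν₂ := ν₂) (θ₁ := θ₁) (θ₂ := θ₂)
    (Nat.isCoprime_iff_coprime.2 hpq) (by positivity) (by positivity) hν₁.ne'
    (by push_cast; rw [hν₂]; field_simp)
  push_cast at hleast
  set x := ((p : ℝ) * θ₁ - q * θ₂) / π
  have hhalf : ((p : ℝ) * θ₁ - q * θ₂) / (π / 2) = 2 * x := by simp only [x]; field_simp
  rw [hhalf, infDist_two_mul_intCast_eq, infDist_intCast_eq_abs_sub_round]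
  refine ⟨?_, by rw [hT]; field_simp; ring⟩
  convert hleast using 1
  rw [hT, abs_of_pos (mul_pos hp' hν₁)]
  field_simp
  ring
end

section
/- Let H be a complex Hilbert space and let (U_t)_{t∈ℝ} be a strongly continuous group of unitary operators on H: U_0 = I, U_{t+s} = U_t U_s, each U_t is a surjective linear isometry, and t ↦ U_t u is continuous for each u ∈ H. Let P be a densely defined symmetric linear operator on H with domain D(P) such that: (generator property) whenever the limit w = lim_{ε→0} (U_ε u − u)/ε exists in H, one has u ∈ D(P) and w = −i·P u; (resolvent) there is a compact bounded operator R on H, commuting with every U_t, such that R(Pu − i·u) = u for all u ∈ D(P), and for every v ∈ H one has Rv ∈ D(P) with P(Rv) − i·Rv = v. Let B be a bounded operator on H satisfying the unique continuation property: for every λ ∈ ℝ and every u ∈ D(P), if Pu = λu and Bu = 0 then u = 0. Let T₀ > 0 and assume there exist a compact self-adjoint operator K on H and C₀ > 0 such that ‖u‖² ≤ C₀·∫₀^{T₀} ‖B U_t u‖² dt + ⟨u, K u⟩ for all u ∈ H. Then for every T > T₀ there exists C > 0 such that ‖u‖² ≤ C·∫₀^T ‖B U_t u‖² dt for all u ∈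 H. -/
/-!
If the estimate failed on `[0, T]`, there would be unit vectors `vₙ` with
`∫₀ᵀ ‖B Uₜ vₙ‖² ≤ 2⁻ⁿ`. Take a weak limit `u` along an ultrafilter. Compactness of `K` makes
`⟪vₙ, K vₙ⟫` converge to `⟪u, K u⟫`, so the hypothesis gives `1 ≤ re ⟪u, K u⟫` and `u ≠ 0`; summability
of the observations gives `B Uₜ u = 0` for a.e., hence every, `t ∈ [0, T]`.

The spaces `N a` of vectors unobserved on `[0, a]` decrease with `a` and, for `a ≥ T₀`, satisfy
`‖x‖ ≤ ‖K x‖`, so they are finite-dimensional. Their dimension is therefore constant on some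
`[T₁, T₂] ⊂ (T₀, T)`, which makes `N T₂ ∋ u` invariant under `Uₛ` for `0 ≤ s ≤ T₂ - T₁`. A
finite-dimensional subspace invariant under the group for short times lies in the domain of the
generator and is invariant under `P`; an eigenvector of the symmetric restriction of `P` then has
a real eigenvalue and is annihilated by `B`, contradicting unique continuation.
-/

open MeasureTheory Filter Metric Set Topology
open scoped InnerProductSpace

section WeakLimits

variable {𝕜 E F ι : Type*} [RCLike 𝕜]
  [NormedAddCommGroup E] [InnerProductSpace 𝕜 E] [NormedAddCommGroup F] [InnerProductSpace 𝕜 F]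
  {v : ι → E} {u : E} {c : ℝ}

theorem exists_tendsto_inner_of_norm_le [CompleteSpace E] (𝒰 : Ultrafilter ι)
    (hv : ∀ i, ‖v i‖ ≤ c) : ∃ u : E, ∀ w, Tendsto (fun i => ⟪v i, w⟫_𝕜) 𝒰 (𝓝 ⟪u, w⟫_𝕜) := by
  have hlim : ∀ w : E, ∃ a : 𝕜, ‖a‖ ≤ c * ‖w‖ ∧ Tendsto (fun i => ⟪v i, w⟫_𝕜) 𝒰 (𝓝 a) := by
    intro w
    obtain ⟨a, ha, hlim⟩ := (isCompact_closedBall (0 : 𝕜) (c * ‖w‖)).ultrafilter_le_nhds'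
      (𝒰.map fun i => ⟪v i, w⟫_𝕜) <| Ultrafilter.mem_map.2 <| univ_mem' fun i =>
        mem_closedBall_zero_iff.2 <|
          (norm_inner_le_norm _ _).trans (mul_le_mul_of_nonneg_right (hv i) (norm_nonneg w))
    exact ⟨a, mem_closedBall_zero_iff.1 ha, hlim⟩
  -- The pointwise limits form a bounded functional, represented by `u` via Riesz.
  choose φ hφ_le hφ using hlim
  let φL : E →ₗ[𝕜] 𝕜 :=
    { toFun := φ
      map_add' := fun w₁ w₂ => tendsto_nhds_unique (hφ _) <| by
        simpa only [inner_add_right] using (hφ w₁).add (hφ w₂)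
      map_smul' := fun a w => tendsto_nhds_unique (hφ _) <| by
        simpa [inner_smul_right] using (hφ w).const_mul a }
  refine ⟨(InnerProductSpace.toDual 𝕜 E).symm (φL.mkContinuous c hφ_le), fun w => ?_⟩
  simpa [InnerProductSpace.toDual_symm_apply, φL] using hφ w

variable {l : Filter ι}

theorem tendsto_inner_map_of_tendsto_inner [CompleteSpace E] [CompleteSpace F] (A : E →L[𝕜] F)
    (hvu : ∀ w, Tendsto (fun i => ⟪v i, w⟫_𝕜) l (𝓝 ⟪u, w⟫_𝕜)) (w : F) :
    Tendsto (fun i => ⟪A (v i), w⟫_𝕜) l (𝓝 ⟪A u, w⟫_𝕜) := by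
  simpa only [ContinuousLinearMap.adjoint_inner_right] using hvu (A.adjoint w)

theorem eq_of_tendsto_of_tendsto_inner [l.NeBot] {x : E} (hv : Tendsto v l (𝓝 x))
    (hvu : ∀ w, Tendsto (fun i => ⟪v i, w⟫_𝕜) l (𝓝 ⟪u, w⟫_𝕜)) : x = u :=
  ext_inner_right 𝕜 fun w => tendsto_nhds_unique (hv.inner tendsto_const_nhds) (hvu w)

theorem IsCompactOperator.tendsto_of_tendsto_inner [CompleteSpace E] [CompleteSpace F]
    {K : E →L[𝕜] F} (hK : IsCompactOperator K) (𝒰 : Ultrafilter ι) (hv : ∀ i, ‖v i‖ ≤ c)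
    (hvu : ∀ w, Tendsto (fun i => ⟪v i, w⟫_𝕜) 𝒰 (𝓝 ⟪u, w⟫_𝕜)) :
    Tendsto (fun i => K (v i)) 𝒰 (𝓝 (K u)) := by
  obtain ⟨y, -, hy⟩ :=
    (hK.isCompact_closure_image_of_bounded isBounded_closedBall).ultrafilter_le_nhds'
      (𝒰.map fun i => K (v i)) <| Ultrafilter.mem_map.2 <| univ_mem' fun i =>
        subset_closure ⟨v i, mem_closedBall_zero_iff.2 (hv i), rfl⟩
  have hKv : Tendsto (fun i => K (v i)) 𝒰 (𝓝 y) := hy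
  rwa [eq_of_tendsto_of_tendsto_inner hKv (tendsto_inner_map_of_tendsto_inner K hvu)] at hKv

theorem tendsto_inner_of_tendsto_inner_of_tendsto {y : ι → E} {y₀ : E} (hv : ∀ i, ‖v i‖ ≤ c)
    (hvu : ∀ w, Tendsto (fun i => ⟪v i, w⟫_𝕜) l (𝓝 ⟪u, w⟫_𝕜)) (hy : Tendsto y l (𝓝 y₀)) :
    Tendsto (fun i => ⟪v i, y i⟫_𝕜) l (𝓝 ⟪u, y₀⟫_𝕜) := by
  have hsmall : Tendsto (fun i => ⟪v i, y i - y₀⟫_𝕜) l (𝓝 0) := by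
    refine squeeze_zero_norm (fun i => (norm_inner_le_norm _ _).trans
      (mul_le_mul_of_nonneg_right (hv i) (norm_nonneg _))) ?_
    simpa using (tendsto_iff_norm_sub_tendsto_zero.1 hy).const_mul c
  simpa [inner_sub_right] using hsmall.add (hvu y₀)

end WeakLimits

theorem finiteDimensional_of_isCompactOperator_of_norm_le {𝕜 E F : Type*}
    [NontriviallyNormedField 𝕜] [CompleteSpace 𝕜] [NormedAddCommGroup E] [NormedSpace 𝕜 E]
    [NormedAddCommGroup F] [NormedSpace 𝕜 F] {N : Submodule 𝕜 E} [CompleteSpace N]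
    {K : E →L[𝕜] F} (hK : IsCompactOperator K) (hN : ∀ v ∈ N, ‖v‖ ≤ ‖K v‖) :
    FiniteDimensional 𝕜 N := by
  let KN : N →L[𝕜] F := K.comp N.subtypeL
  have hKN : IsClosedEmbedding KN := by
    refine (KN.antilipschitz_of_bound (K := 1) fun v => ?_).isClosedEmbedding KN.uniformContinuous
    rw [NNReal.coe_one, one_mul]
    exact hN v v.2
  have hcpt : IsCompact (KN ⁻¹' closure (K '' closedBall 0 1)) :=
    hKN.isCompact_preimage (hK.isCompact_closure_image_of_bounded isBounded_closedBall)
  refine .of_isCompact_closedBall₀ 𝕜 one_pos (hcpt.of_isClosed_subset isClosed_closedBall ?_)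
  exact fun v hv => subset_closure ⟨v, by simpa using hv, rfl⟩

theorem ae_tendsto_zero_of_summable_integral {α : Type*} [MeasurableSpace α] {μ : Measure α}
    {f : ℕ → α → ℝ} (hf_nonneg : ∀ n x, 0 ≤ f n x) (hf : ∀ n, Integrable (f n) μ)
    (hsum : Summable fun n => ∫ x, f n x ∂μ) :
    ∀ᵐ x ∂μ, Tendsto (fun n => f n x) atTop (𝓝 0) := by
  have hmeas : ∀ n, AEMeasurable (fun x => ENNReal.ofReal (f n x)) μ :=
    fun n => (hf n).aemeasurable.ennreal_ofReal
  have hfin : ∫⁻ x, ∑' n, ENNReal.ofReal (f n x) ∂μ ≠ ⊤ := by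
    rw [lintegral_tsum hmeas]
    simp_rw [← ofReal_integral_eq_lintegral_ofReal (hf _) (ae_of_all _ (hf_nonneg _))]
    rw [← ENNReal.ofReal_tsum_of_nonneg (fun n => integral_nonneg (hf_nonneg n)) hsum]
    exact ENNReal.ofReal_ne_top
  filter_upwards [ae_lt_top' (AEMeasurable.tsum hmeas) hfin] with x hx
  simpa [Function.comp_def, ENNReal.toReal_ofReal (hf_nonneg _ x)] using
    (ENNReal.tendsto_toReal ENNReal.zero_ne_top).comp
      (ENNReal.tendsto_atTop_zero_of_tsum_ne_top hx.ne)

theorem exists_norm_sq_le_mul_of_forall_norm_eq_one {𝕜 E : Type*} [RCLike 𝕜]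
    [NormedAddCommGroup E] [NormedSpace 𝕜 E] {J : E → ℝ}
    (hJ : ∀ (a : 𝕜) (v : E), J (a • v) = ‖a‖ ^ 2 * J v) {ε : ℝ} (hε : 0 < ε)
    (h : ∀ v : E, ‖v‖ = 1 → ε ≤ J v) : ∃ C > 0, ∀ u : E, ‖u‖ ^ 2 ≤ C * J u := by
  refine ⟨ε⁻¹, inv_pos.2 hε, fun u => ?_⟩
  rcases eq_or_ne u 0 with rfl | hu
  · have hJ0 : J 0 = 0 := by simpa using hJ 0 0
    simp [hJ0]
  have hJu := h _ (norm_smul_inv_norm (𝕜 := 𝕜) hu)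
  rw [hJ, norm_inv, RCLike.norm_ofReal, abs_norm, inv_pow] at hJu
  rw [le_inv_mul_iff₀ hε]
  rwa [le_inv_mul_iff₀ (by positivity), mul_comm] at hJu

theorem Submodule.intervalIntegral_mem {H : Type*} [NormedAddCommGroup H]
    [InnerProductSpace ℂ H] [CompleteSpace H] (V : Submodule ℂ H) [V.HasOrthogonalProjection]
    {f : ℝ → H} {a b : ℝ} (hf : IntervalIntegrable f volume a b) (hV : ∀ s ∈ uIcc a b, f s ∈ V) :
    ∫ s in a..b, f s ∈ V := by
  have hproj : ∫ s in a..b, V.starProjection (f s) = ∫ s in a..b, f s :=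
    intervalIntegral.integral_congr fun s hs => V.starProjection_eq_self_iff.2 (hV s hs)
  rw [← hproj, V.starProjection.intervalIntegral_comp_comm hf]
  exact V.starProjection_apply_mem _

section OneParameterGroup

variable {E : Type*} [NormedAddCommGroup E] [NormedSpace ℂ E] [CompleteSpace E]
  {U : ℝ → E ≃ₗᵢ[ℂ] E}

theorem apply_integral_orbit (hUgrp : ∀ s t : ℝ, ∀ u : E, U (t + s) u = U t (U s u))
    (hUcont : ∀ u : E, Continuous fun t : ℝ => U t u) (x : E) (z ε : ℝ) :
    U z (∫ s in (0 : ℝ)..ε, U s x) = (∫ s in (0 : ℝ)..z + ε, U s x) - ∫ s in (0 : ℝ)..z, U s x := by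
  rw [← (U z).coe_toLinearIsometry, ← LinearIsometry.intervalIntegral_comp_comm,
    intervalIntegral.integral_interval_sub_left ((hUcont x).intervalIntegrable _ _)
      ((hUcont x).intervalIntegrable _ _)]
  simp_rw [LinearIsometryEquiv.coe_toLinearIsometry, ← hUgrp]
  rw [intervalIntegral.integral_comp_add_left (fun s => U s x) z, add_zero]

theorem tendsto_slope_orbit_integral (hU0 : ∀ u : E, U 0 u = u)
    (hUgrp : ∀ s t : ℝ, ∀ u : E, U (t + s) u = U t (U s u))
    (hUcont : ∀ u : E, Continuous fun t : ℝ => U t u) (x : E) (ε : ℝ) :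
    Tendsto (fun h : ℝ => h⁻¹ • (U h (∫ s in (0 : ℝ)..ε, U s x) - ∫ s in (0 : ℝ)..ε, U s x))
      (𝓝[≠] 0) (𝓝 (U ε x - x)) := by
  have hderiv : HasDerivAt (fun z => U z (∫ s in (0 : ℝ)..ε, U s x)) (U ε x - U 0 x) 0 := by
    simp_rw [apply_integral_orbit hUgrp hUcont]
    have h := ((hUcont x).integral_hasStrictDerivAt 0 (0 + ε)).hasDerivAt.comp_add_const 0 ε
    rw [zero_add] at h
    exact h.sub ((hUcont x).integral_hasStrictDerivAt 0 0).hasDerivAt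
  simpa [hU0] using hasDerivAt_iff_tendsto_slope_zero.1 hderiv

theorem tendsto_average_orbit_integral (hU0 : ∀ u : E, U 0 u = u)
    (hUcont : ∀ u : E, Continuous fun t : ℝ => U t u) (x : E) :
    Tendsto (fun ε : ℝ => ε⁻¹ • ∫ s in (0 : ℝ)..ε, U s x) (𝓝[≠] 0) (𝓝 x) := by
  simpa [hU0] using hasDerivAt_iff_tendsto_slope_zero.1
    ((hUcont x).integral_hasStrictDerivAt 0 0).hasDerivAt

end OneParameterGroup

theorem exists_forall_eq_of_antitone {α 𝕜 V : Type*} [LinearOrder α] [DenselyOrdered α]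
    [DivisionRing 𝕜] [AddCommGroup V] [Module 𝕜 V] {N : α → Submodule 𝕜 V} (hN : Antitone N)
    {a b : α} (hfd : ∀ s ∈ Ioo a b, FiniteDimensional 𝕜 (N s)) (hab : a < b) :
    ∃ c ∈ Ioo a b, ∀ d ∈ Ico c b, N d = N c := by
  obtain ⟨c, hc, hmin⟩ := exists_minimalFor_of_wellFoundedLT (· ∈ Ioo a b)
    (fun s => Module.finrank 𝕜 (N s)) (nonempty_Ioo.2 hab)
  refine ⟨c, hc, fun d hd => ?_⟩
  have hd' : d ∈ Ioo a b := ⟨hc.1.trans_le hd.1, hd.2⟩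
  have hle : N d ≤ N c := hN hd.1
  have := hfd c hc
  exact Submodule.eq_of_le_of_finrank_le hle (hmin hd' (Submodule.finrank_mono hle))

section Unobservable

variable {E F : Type*} [NormedAddCommGroup E] [NormedSpace ℂ E]
  [NormedAddCommGroup F] [NormedSpace ℂ F]

def unobservable (B : E →L[ℂ] F) (U : ℝ → E ≃ₗᵢ[ℂ] E) (a : ℝ) : Submodule ℂ E :=
  ⨅ t ∈ Icc (0 : ℝ) a, LinearMap.ker (B.toLinearMap ∘ₗ (U t).toLinearMap)

variable {B : E →L[ℂ] F} {U : ℝ → E ≃ₗᵢ[ℂ] E} {a : ℝ} {x : E}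

theorem mem_unobservable : x ∈ unobservable B U a ↔ ∀ t ∈ Icc (0 : ℝ) a, B (U t x) = 0 := by
  simp [unobservable]

theorem isClosed_unobservable (B : E →L[ℂ] F) (U : ℝ → E ≃ₗᵢ[ℂ] E) (a : ℝ) :
    IsClosed (unobservable B U a : Set E) := by
  have : (unobservable B U a : Set E) = ⋂ t ∈ Icc (0 : ℝ) a, {x | B (U t x) = 0} := by
    ext x
    simp [mem_unobservable]
  rw [this]
  exact isClosed_biInter fun t _ =>
    isClosed_eq (B.continuous.comp (U t).continuous) continuous_const

theorem unobservable_antitone (B : E →L[ℂ] F) (U : ℝ → E ≃ₗᵢ[ℂ] E) :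
    Antitone (unobservable B U) := fun _ _ hab =>
  biInf_mono fun _ ht => ⟨ht.1, ht.2.trans hab⟩

theorem apply_mem_unobservable (hUgrp : ∀ s t : ℝ, ∀ u : E, U (t + s) u = U t (U s u)) {s : ℝ}
    (hs : 0 ≤ s) (hx : x ∈ unobservable B U (a + s)) : U s x ∈ unobservable B U a := by
  rw [mem_unobservable] at hx ⊢
  intro t ht
  rw [← hUgrp]
  exact hx (t + s) ⟨by linarith [ht.1], by linarith [ht.2]⟩

theorem apply_mem_unobservable_of_eq (hUgrp : ∀ s t : ℝ, ∀ u : E, U (t + s) u = U t (U s u))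
    {b s : ℝ} (hab : unobservable B U a = unobservable B U b) (hs : s ∈ Icc 0 (b - a))
    (hx : x ∈ unobservable B U b) : U s x ∈ unobservable B U b := by
  rw [← hab]
  exact apply_mem_unobservable hUgrp hs.1 (unobservable_antitone B U (by linarith [hs.2]) hx)

end Unobservable

theorem exists_eigenvector_of_invariant {H : Type*} [NormedAddCommGroup H]
    [InnerProductSpace ℂ H] {D : Submodule ℂ H} {P : D →ₗ[ℂ] H}
    (hPsym : ∀ u v : D, ⟪P u, (v : H)⟫_ℂ = ⟪(u : H), P v⟫_ℂ)
    (V : Submodule ℂ H) [FiniteDimensional ℂ V] [Nontrivial V]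
    (hV : ∀ x ∈ V, ∃ hx : x ∈ D, P ⟨x, hx⟩ ∈ V) :
    ∃ (l : ℝ) (x : D), (x : H) ∈ V ∧ (x : H) ≠ 0 ∧ P x = (l : ℂ) • (x : H) := by
  choose hVD hVP using hV
  let j : V →ₗ[ℂ] D := LinearMap.codRestrict D V.subtype fun z => hVD z z.2
  let PV : Module.End ℂ V := LinearMap.codRestrict V (P ∘ₗ j) fun z => hVP z z.2
  have hPV : PV.IsSymmetric := fun a b => hPsym (j a) (j b)
  obtain ⟨μ, hμ⟩ := Module.End.exists_eigenvalue PV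
  obtain ⟨z, hz⟩ := hμ.exists_hasEigenvector
  have hμ_real : ((μ.re : ℝ) : ℂ) = μ := Complex.conj_eq_iff_re.1 (hPV.conj_eigenvalue_eq_self hμ)
  refine ⟨μ.re, j z, z.2, fun h => hz.2 (Subtype.ext h), ?_⟩
  rw [hμ_real]
  exact congrArg Subtype.val hz.apply_eq_smul

section Generator

variable {H : Type*} [NormedAddCommGroup H] [InnerProductSpace ℂ H] [CompleteSpace H]
  {U : ℝ → H ≃ₗᵢ[ℂ] H} {D : Submodule ℂ H} {P : D →ₗ[ℂ] H}

theorem forall_mem_domain_of_invariant (hU0 : ∀ u : H, U 0 u = u)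
    (hUgrp : ∀ s t : ℝ, ∀ u : H, U (t + s) u = U t (U s u))
    (hUcont : ∀ u : H, Continuous fun t : ℝ => U t u)
    (hPgen : ∀ u w : H,
      Tendsto (fun ε : ℝ => ε⁻¹ • (U ε u - u)) (𝓝[≠] 0) (𝓝 w) →
      ∃ hu : u ∈ D, w = (-Complex.I) • P ⟨u, hu⟩)
    (V : Submodule ℂ H) [FiniteDimensional ℂ V] {δ : ℝ} (hδ : 0 < δ)
    (hV : ∀ s ∈ Icc 0 δ, ∀ x ∈ V, U s x ∈ V) :
    ∀ x ∈ V, ∃ hx : x ∈ D, P ⟨x, hx⟩ ∈ V := by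
  -- `x ∈ V` is the limit of the averages `ε⁻¹ ∫₀^ε Uₛ x`, which lie in the closed space `M`.
  let M : Submodule ℂ H := (V.comap D.subtype ⊓ V.comap P).map D.subtype
  have hMV : M ≤ V := by
    rintro _ ⟨y, hy, rfl⟩
    exact hy.1
  have hM : IsClosed (M : Set H) := by
    have := Submodule.finiteDimensional_of_le hMV
    exact M.closed_of_finiteDimensional
  have hwM : ∀ x ∈ V, ∀ ε ∈ Ioc 0 δ, ε⁻¹ • ∫ s in (0 : ℝ)..ε, U s x ∈ M := by
    intro x hx ε hε
    have hw : ∫ s in (0 : ℝ)..ε, U s x ∈ V := by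
      refine V.intervalIntegral_mem ((hUcont x).intervalIntegrable _ _) fun s hs => ?_
      rw [uIcc_of_le hε.1.le] at hs
      exact hV s ⟨hs.1, hs.2.trans hε.2⟩ x hx
    obtain ⟨hwD, hPw⟩ := hPgen _ _ (tendsto_slope_orbit_integral hU0 hUgrp hUcont x ε)
    have hPw' : P ⟨_, hwD⟩ = Complex.I • (U ε x - x) := by
      rw [hPw, smul_smul]
      simp
    refine M.smul_mem _ ⟨⟨_, hwD⟩, ⟨hw, ?_⟩, rfl⟩
    show P ⟨_, hwD⟩ ∈ V
    rw [hPw']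
    exact V.smul_mem _ (V.sub_mem (hV ε ⟨hε.1.le, hε.2⟩ x hx) hx)
  intro x hx
  obtain ⟨y, hy, rfl⟩ : x ∈ M :=
    hM.mem_of_tendsto ((tendsto_average_orbit_integral hU0 hUcont x).mono_left (nhdsGT_le_nhdsNE 0))
      (eventually_of_mem (Ioc_mem_nhdsGT hδ) (hwM x hx))
  exact ⟨y.2, hy.2⟩

theorem unobservable_eq_bot_of_eq {G : Type*} [NormedAddCommGroup G] [NormedSpace ℂ G]
    {B : H →L[ℂ] G} (hU0 : ∀ u : H, U 0 u = u)
    (hUgrp : ∀ s t : ℝ, ∀ u : H, U (t + s) u = U t (U s u))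
    (hUcont : ∀ u : H, Continuous fun t : ℝ => U t u)
    (hPsym : ∀ u v : D, ⟪P u, (v : H)⟫_ℂ = ⟪(u : H), P v⟫_ℂ)
    (hPgen : ∀ u w : H,
      Tendsto (fun ε : ℝ => ε⁻¹ • (U ε u - u)) (𝓝[≠] 0) (𝓝 w) →
      ∃ hu : u ∈ D, w = (-Complex.I) • P ⟨u, hu⟩)
    (hUC : ∀ (l : ℝ) (u : D), P u = (l : ℂ) • (u : H) → B u = 0 → (u : H) = 0)
    {a b : ℝ} (hb : 0 ≤ b) (hab : a < b) [FiniteDimensional ℂ (unobservable B U b)]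
    (hN : unobservable B U a = unobservable B U b) : unobservable B U b = ⊥ := by
  by_contra hne
  have : Nontrivial (unobservable B U b) := Submodule.nontrivial_iff_ne_bot.2 hne
  obtain ⟨l, z, hzN, hz0, hPz⟩ := exists_eigenvector_of_invariant hPsym _ <|
    forall_mem_domain_of_invariant hU0 hUgrp hUcont hPgen _ (sub_pos.2 hab)
      fun s hs x hx => apply_mem_unobservable_of_eq hUgrp hN hs hx
  exact hz0 <| hUC l z hPz <| by
    simpa [hU0] using mem_unobservable.1 hzN 0 ⟨le_rfl, hb⟩

end Generator

section Observation

variable {H : Type*} [NormedAddCommGroup H] [InnerProductSpace ℂ H]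
  {G : Type*} [NormedAddCommGroup G] [InnerProductSpace ℂ G] {U : ℝ → H ≃ₗᵢ[ℂ] H} {B : H →L[ℂ] G}

theorem integral_norm_sq_smul (B : H →L[ℂ] G) (U : ℝ → H ≃ₗᵢ[ℂ] H) (T : ℝ) (c : ℂ) (v : H) :
    ∫ t in (0 : ℝ)..T, ‖B (U t (c • v))‖ ^ 2 = ‖c‖ ^ 2 * ∫ t in (0 : ℝ)..T, ‖B (U t v)‖ ^ 2 := by
  rw [← intervalIntegral.integral_const_mul]
  simp [norm_smul, mul_pow]

theorem integral_norm_sq_mono (hUcont : ∀ u : H, Continuous fun t : ℝ => U t u) (x : H)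
    {a b : ℝ} (ha : 0 ≤ a) (hab : a ≤ b) :
    ∫ t in (0 : ℝ)..a, ‖B (U t x)‖ ^ 2 ≤ ∫ t in (0 : ℝ)..b, ‖B (U t x)‖ ^ 2 :=
  intervalIntegral.integral_mono_interval le_rfl ha hab (ae_of_all _ fun _ => by positivity)
    (((B.continuous.comp (hUcont x)).norm.pow 2).intervalIntegrable _ _)

theorem norm_le_norm_of_mem_unobservable {K : H →L[ℂ] H} {C₀ T₀ a : ℝ}
    (hobs : ∀ u : H, ‖u‖ ^ 2 ≤ C₀ * (∫ t in (0 : ℝ)..T₀, ‖B (U t u)‖ ^ 2) + (⟪u, K u⟫_ℂ).re)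
    (hT₀ : 0 ≤ T₀) (ha : T₀ ≤ a) {x : H} (hx : x ∈ unobservable B U a) : ‖x‖ ≤ ‖K x‖ := by
  have hzero : ∫ t in (0 : ℝ)..T₀, ‖B (U t x)‖ ^ 2 = 0 := by
    rw [intervalIntegral.integral_congr (g := fun _ => (0 : ℝ)) fun t ht => ?_,
      intervalIntegral.integral_zero]
    rw [uIcc_of_le hT₀] at ht
    simp [mem_unobservable.1 hx t ⟨ht.1, ht.2.trans ha⟩]
  have h := hobs x
  rw [hzero, mul_zero, zero_add] at h
  have hre : (⟪x, K x⟫_ℂ).re ≤ ‖x‖ * ‖K x‖ := (Complex.re_le_norm _).trans (norm_inner_le_norm _ _)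
  nlinarith [norm_nonneg x, norm_nonneg (K x)]

theorem finiteDimensional_unobservable [CompleteSpace H] {K : H →L[ℂ] H}
    (hK : IsCompactOperator K) {C₀ T₀ a : ℝ}
    (hobs : ∀ u : H, ‖u‖ ^ 2 ≤ C₀ * (∫ t in (0 : ℝ)..T₀, ‖B (U t u)‖ ^ 2) + (⟪u, K u⟫_ℂ).re)
    (hT₀ : 0 ≤ T₀) (ha : T₀ ≤ a) : FiniteDimensional ℂ (unobservable B U a) := by
  have := (isClosed_unobservable B U a).completeSpace_coe
  exact finiteDimensional_of_isCompactOperator_of_norm_le hK fun x hx =>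
    norm_le_norm_of_mem_unobservable hobs hT₀ ha hx

theorem one_le_re_inner_of_tendsto_inner [CompleteSpace H] {ι : Type*} {J : H → ℝ} {C₀ : ℝ}
    {K : H →L[ℂ] H}
    (hK : IsCompactOperator K) (hobs : ∀ u : H, ‖u‖ ^ 2 ≤ C₀ * J u + (⟪u, K u⟫_ℂ).re)
    (𝒰 : Ultrafilter ι) {v : ι → H} {u : H} (hv : ∀ i, ‖v i‖ = 1)
    (hJ : Tendsto (fun i => J (v i)) 𝒰 (𝓝 0))
    (hvu : ∀ w, Tendsto (fun i => ⟪v i, w⟫_ℂ) 𝒰 (𝓝 ⟪u, w⟫_ℂ)) : 1 ≤ (⟪u, K u⟫_ℂ).re := by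
  have hv_le : ∀ i, ‖v i‖ ≤ 1 := fun i => (hv i).le
  have hlim : Tendsto (fun i => C₀ * J (v i) + (⟪v i, K (v i)⟫_ℂ).re) 𝒰
      (𝓝 (C₀ * 0 + (⟪u, K u⟫_ℂ).re)) :=
    (hJ.const_mul C₀).add <| (Complex.continuous_re.tendsto _).comp <|
      tendsto_inner_of_tendsto_inner_of_tendsto hv_le hvu (hK.tendsto_of_tendsto_inner 𝒰 hv_le hvu)
  simpa using ge_of_tendsto hlim (Eventually.of_forall fun i => by simpa [hv i] using hobs (v i))

theorem mem_unobservable_of_tendsto_inner [CompleteSpace H] [CompleteSpace G]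
    (hUcont : ∀ u : H, Continuous fun t : ℝ => U t u)
    {𝒰 : Filter ℕ} [𝒰.NeBot] (h𝒰 : 𝒰 ≤ atTop) {v : ℕ → H} {u : H}
    (hvu : ∀ w, Tendsto (fun n => ⟪v n, w⟫_ℂ) 𝒰 (𝓝 ⟪u, w⟫_ℂ)) {T : ℝ} (hT : 0 < T)
    (hsum : Summable fun n => ∫ t in (0 : ℝ)..T, ‖B (U t (v n))‖ ^ 2) :
    u ∈ unobservable B U T := by
  have hcont : ∀ x, Continuous fun t => B (U t x) := fun x => B.continuous.comp (hUcont x)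
  have hae : ∀ᵐ t ∂volume.restrict (Ioc 0 T), Tendsto (fun n => ‖B (U t (v n))‖ ^ 2) atTop (𝓝 0) :=
    ae_tendsto_zero_of_summable_integral (fun _ _ => by positivity)
      (fun n => ((hcont (v n)).norm.pow 2).integrableOn_Ioc)
      (by simpa [intervalIntegral.integral_of_le hT.le] using hsum)
  have hzero : ∀ᵐ t ∂volume.restrict (Icc 0 T), B (U t u) = 0 := by
    rw [Measure.restrict_congr_set Ioc_ae_eq_Icc.symm]
    filter_upwards [hae] with t ht
    have hBv : Tendsto (fun n => B (U t (v n))) atTop (𝓝 0) :=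
      tendsto_zero_iff_norm_tendsto_zero.2 (by simpa using ht.sqrt)
    exact (eq_of_tendsto_of_tendsto_inner (hBv.mono_left h𝒰)
      (tendsto_inner_map_of_tendsto_inner (B.comp (U t : H →L[ℂ] H)) hvu)).symm
  exact mem_unobservable.2 <| Measure.eqOn_of_ae_eq hzero (hcont u).continuousOn continuousOn_const
    (by rw [interior_Icc, closure_Ioo hT.ne])

theorem exists_ne_zero_mem_unobservable [CompleteSpace H] [CompleteSpace G]
    (hUcont : ∀ u : H, Continuous fun t : ℝ => U t u) {K : H →L[ℂ] H} (hK : IsCompactOperator K)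
    {C₀ T₀ T : ℝ}
    (hobs : ∀ u : H, ‖u‖ ^ 2 ≤ C₀ * (∫ t in (0 : ℝ)..T₀, ‖B (U t u)‖ ^ 2) + (⟪u, K u⟫_ℂ).re)
    (hT₀ : 0 ≤ T₀) (hT : T₀ < T)
    (hsmall : ∀ ε > 0, ∃ v : H, ‖v‖ = 1 ∧ ∫ t in (0 : ℝ)..T, ‖B (U t v)‖ ^ 2 < ε) :
    ∃ u ≠ 0, u ∈ unobservable B U T := by
  choose v hv_norm hv_small using fun n : ℕ => hsmall ((2 : ℝ)⁻¹ ^ n) (by positivity)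
  have hv_nonneg : ∀ {a} n, 0 ≤ a → 0 ≤ ∫ t in (0 : ℝ)..a, ‖B (U t (v n))‖ ^ 2 :=
    fun n ha => intervalIntegral.integral_nonneg ha fun _ _ => by positivity
  let 𝒰 := Ultrafilter.of (atTop : Filter ℕ)
  obtain ⟨u, hvu⟩ := exists_tendsto_inner_of_norm_le (𝕜 := ℂ) 𝒰 fun n => (hv_norm n).le
  have hvT₀ : Tendsto (fun n => ∫ t in (0 : ℝ)..T₀, ‖B (U t (v n))‖ ^ 2) 𝒰 (𝓝 0) := by
    refine .mono_left (squeeze_zero (g := fun n => (2 : ℝ)⁻¹ ^ n) (fun n => hv_nonneg n hT₀)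
      (fun n => ?_) ?_) (Ultrafilter.of_le _)
    · exact (integral_norm_sq_mono hUcont _ hT₀ hT.le).trans (hv_small n).le
    · exact tendsto_pow_atTop_nhds_zero_of_lt_one (by norm_num) (by norm_num)
  refine ⟨u, ?_, mem_unobservable_of_tendsto_inner hUcont (Ultrafilter.of_le _) hvu
    (hT₀.trans_lt hT) ?_⟩
  · rintro rfl
    exact absurd (one_le_re_inner_of_tendsto_inner hK hobs 𝒰 hv_norm hvT₀ hvu) (by simp)
  · exact .of_nonneg_of_le (fun n => hv_nonneg n (hT₀.trans hT.le)) (fun n => (hv_small n).le)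
      (summable_geometric_of_lt_one (by norm_num) (by norm_num))

end Observation

theorem stmt_18_general {H : Type*} [NormedAddCommGroup H] [InnerProductSpace ℂ H] [CompleteSpace H]
    (U : ℝ → (H ≃ₗᵢ[ℂ] H))
    (hU0 : ∀ u : H, U 0 u = u)
    (hUgrp : ∀ s t : ℝ, ∀ u : H, U (t + s) u = U t (U s u))
    (hUcont : ∀ u : H, Continuous fun t : ℝ => U t u)
    (D : Submodule ℂ H)
    (P : D →ₗ[ℂ] H)
    (hPsym : ∀ u v : D, (inner ℂ (P u) (v : H) : ℂ) = inner ℂ (u : H) (P v))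
    (hPgen : ∀ u w : H,
      Filter.Tendsto (fun ε : ℝ => ε⁻¹ • (U ε u - u)) (nhdsWithin 0 {(0 : ℝ)}ᶜ) (nhds w) →
      ∃ hu : u ∈ D, w = (-Complex.I) • P ⟨u, hu⟩)
    (B : H →L[ℂ] H)
    (hUC : ∀ (l : ℝ) (u : D), P u = (l : ℂ) • (u : H) → B u = 0 → (u : H) = 0)
    (T₀ : ℝ) (hT₀ : 0 < T₀)
    (K : H →L[ℂ] H) (hKcompact : IsCompactOperator K)
    (C₀ : ℝ)
    (hobs : ∀ u : H, ‖u‖ ^ 2 ≤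
      C₀ * (∫ t in (0 : ℝ)..T₀, ‖B (U t u)‖ ^ 2) + (inner ℂ u (K u) : ℂ).re) :
    ∀ T : ℝ, T₀ < T → ∃ C > 0, ∀ u : H,
      ‖u‖ ^ 2 ≤ C * ∫ t in (0 : ℝ)..T, ‖B (U t u)‖ ^ 2 := by
  intro T hT
  suffices ∃ ε > 0, ∀ v : H, ‖v‖ = 1 → ε ≤ ∫ t in (0 : ℝ)..T, ‖B (U t v)‖ ^ 2 by
    obtain ⟨ε, hε, h⟩ := this
    exact exists_norm_sq_le_mul_of_forall_norm_eq_one (integral_norm_sq_smul B U T) hε h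
  by_contra! hsmall
  obtain ⟨u, hu, huT⟩ := exists_ne_zero_mem_unobservable hUcont hKcompact hobs hT₀.le hT hsmall
  have hfd : ∀ a, T₀ ≤ a → FiniteDimensional ℂ (unobservable B U a) :=
    fun a ha => finiteDimensional_unobservable hKcompact hobs hT₀.le ha
  obtain ⟨T₁, hT₁, hconst⟩ := exists_forall_eq_of_antitone (unobservable_antitone B U)
    (fun s hs => hfd s hs.1.le) hT
  obtain ⟨T₂, hT₁₂, hT₂⟩ := exists_between hT₁.2
  have := hfd T₂ (hT₁.1.trans hT₁₂).le
  have hbot := unobservable_eq_bot_of_eq hU0 hUgrp hUcont hPsym hPgen hUC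
    (hT₀.trans (hT₁.1.trans hT₁₂)).le hT₁₂ (hconst T₂ ⟨hT₁₂.le, hT₂⟩).symm
  exact hu <| (Submodule.mem_bot ℂ).1 <| hbot ▸ unobservable_antitone B U hT₂.le huT

/-- Reduction of observability to a weaker inequality with compact remainder: for a strongly
continuous unitary group `U_t` generated by a densely defined symmetric operator `P` with
compact resolvent, which commutes with `U_t`, and a bounded operator `B` satisfying unique
continuation for eigenfunctions of `P`, an observability inequality in time `T₀` up to a
compact self-adjoint remainder `K` implies the full observability inequality in any time
`T > T₀`. -/
theorem stmt_18 {H : Type*} [NormedAddCommGroup H] [InnerProductSpace ℂ H] [CompleteSpace H]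
    (U : ℝ → (H ≃ₗᵢ[ℂ] H))
    (hU0 : ∀ u : H, U 0 u = u)
    (hUgrp : ∀ s t : ℝ, ∀ u : H, U (t + s) u = U t (U s u))
    (hUcont : ∀ u : H, Continuous fun t : ℝ => U t u)
    (D : Submodule ℂ H) (hD : Dense (D : Set H))
    (P : D →ₗ[ℂ] H)
    (hPsym : ∀ u v : D, (inner ℂ (P u) (v : H) : ℂ) = inner ℂ (u : H) (P v))
    (hPgen : ∀ u w : H,
      Filter.Tendsto (fun ε : ℝ => ε⁻¹ • (U ε u - u)) (nhdsWithin 0 {(0 : ℝ)}ᶜ) (nhds w) →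
      ∃ hu : u ∈ D, w = (-Complex.I) • P ⟨u, hu⟩)
    (R : H →L[ℂ] H) (hRcompact : IsCompactOperator R)
    (hRcomm : ∀ (t : ℝ) (u : H), R (U t u) = U t (R u))
    (hR1 : ∀ u : D, R (P u - Complex.I • (u : H)) = u)
    (hR2 : ∀ v : H, ∃ hv : R v ∈ D, P ⟨R v, hv⟩ - Complex.I • R v = v)
    (B : H →L[ℂ] H)
    (hUC : ∀ (l : ℝ) (u : D), P u = (l : ℂ) • (u : H) → B u = 0 → (u : H) = 0)
    (T₀ : ℝ) (hT₀ : 0 < T₀)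
    (K : H →L[ℂ] H) (hKcompact : IsCompactOperator K) (hKsa : IsSelfAdjoint K)
    (C₀ : ℝ) (hC₀ : 0 < C₀)
    (hobs : ∀ u : H, ‖u‖ ^ 2 ≤
      C₀ * (∫ t in (0 : ℝ)..T₀, ‖B (U t u)‖ ^ 2) + (inner ℂ u (K u) : ℂ).re) :
    ∀ T : ℝ, T₀ < T → ∃ C > 0, ∀ u : H,
      ‖u‖ ^ 2 ≤ C * ∫ t in (0 : ℝ)..T, ‖B (U t u)‖ ^ 2 :=
  stmt_18_general U hU0 hUgrp hUcont D P hPsym hPgen B hUC T₀ hT₀ K hKcompact C₀ hobs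
end
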